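/- arXiv:1411.1087 — 6 statements merged into one kernel-verified Lean document; each statement's English description precedes it below -/
import Mathlib

section
/- Let M be a symmetric n×n real matrix of rank r with eigendecomposition M = U Σ Uᵀ, and suppose M is μ-incoherent, i.e., ‖eᵢᵀU‖₂ ≤ μ√r/√n for every standard basis vector eᵢ. Then for any symmetric n×n matrix B, the entrywise maximum norm satisfies ‖M B M − M‖_∞ ≤ (μ²r/n)·‖M B M − M‖₂, where ‖·‖₂ denotes the operator norm. -/
open Matrix

/-- Entrywise max-norm statements are phrased pointwise; `opNorm` is the ℓ₂→ℓ₂ operator norm. -/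
noncomputable def opNorm {n : ℕ} (A : Matrix (Fin n) (Fin n) ℝ) : ℝ :=
  ‖Matrix.toEuclideanCLM (𝕜 := ℝ) A‖

/-!
`P = U Uᵀ` is the orthogonal projection onto the column space of `M`, so `P M = M = M P` and
`E := M B M - M` satisfies `E = P E P`. Hence `E i j = ⟪P eᵢ, E (P eⱼ)⟫`, whose absolute value is at
most `‖P eᵢ‖ ‖E‖₂ ‖P eⱼ‖`, and `‖P eᵢ‖ = ‖eᵢᵀ U‖ ≤ μ √r / √n` by incoherence.
-/

open WithLp

lemma EuclideanSpace.norm_toLp_eq_sqrt_sum_sq {n : Type*} [Fintype n] (v : n → ℝ) :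
    ‖toLp 2 v‖ = √(∑ k, v k ^ 2) := by
  simp only [EuclideanSpace.norm_eq, Real.norm_eq_abs, sq_abs]

namespace Matrix

variable {n r : Type*} [Fintype r]

lemma sum_sq_apply_eq_mul_transpose_apply (X : Matrix n r ℝ) (i : n) :
    ∑ k, X i k ^ 2 = (X * Xᵀ) i i := by
  simp only [mul_apply, transpose_apply, sq]

lemma abs_transpose_mul_mul_apply_le [Fintype n] [DecidableEq n] (X A Y : Matrix n n ℝ)
    (i j : n) :
    |(Xᵀ * A * Y) i j| ≤
      ‖toLp 2 (Xᵀ i)‖ * ‖toEuclideanCLM (𝕜 := ℝ) A‖ * ‖toLp 2 (Yᵀ j)‖ := by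
  have hentry : (Xᵀ * A * Y) i j =
      inner ℝ (toLp 2 (Xᵀ i)) (toEuclideanCLM (𝕜 := ℝ) A (toLp 2 (Yᵀ j))) := by
    rw [inner_toEuclideanCLM, dotProduct_mulVec, mul_apply', mul_apply_eq_vecMul]
    rfl
  rw [hentry, mul_assoc]
  exact (abs_real_inner_le_norm _ _).trans
    (mul_le_mul_of_nonneg_left (ContinuousLinearMap.le_opNorm _ _) (norm_nonneg _))

variable [Fintype n] [DecidableEq r] {U : Matrix n r ℝ}

lemma isIdempotentElem_mul_transpose (hU : Uᵀ * U = 1) :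
    IsIdempotentElem (U * Uᵀ) := by
  rw [IsIdempotentElem, Matrix.mul_assoc, ← Matrix.mul_assoc Uᵀ, hU, Matrix.one_mul]

lemma sum_sq_mul_transpose_apply (hU : Uᵀ * U = 1) (i : n) :
    ∑ k, (U * Uᵀ) i k ^ 2 = ∑ k, U i k ^ 2 := by
  rw [sum_sq_apply_eq_mul_transpose_apply, transpose_mul, transpose_transpose,
    (isIdempotentElem_mul_transpose hU).eq, sum_sq_apply_eq_mul_transpose_apply]

lemma mul_transpose_mul_conj (hU : Uᵀ * U = 1) (D : Matrix r r ℝ) :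
    U * Uᵀ * (U * D * Uᵀ) = U * D * Uᵀ := by
  rw [show U * Uᵀ * (U * D * Uᵀ) = U * (Uᵀ * U) * D * Uᵀ by simp only [Matrix.mul_assoc], hU,
    Matrix.mul_one]

lemma conj_mul_mul_transpose (hU : Uᵀ * U = 1) (D : Matrix r r ℝ) :
    U * D * Uᵀ * (U * Uᵀ) = U * D * Uᵀ := by
  rw [Matrix.mul_assoc (U * D), ← Matrix.mul_assoc Uᵀ U, hU, Matrix.one_mul]

end Matrix

theorem stmt0_general (n r : ℕ) (μ : ℝ) (M B : Matrix (Fin n) (Fin n) ℝ)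
    (U : Matrix (Fin n) (Fin r) ℝ) (d : Fin r → ℝ)
    (hU : Uᵀ * U = 1)
    (hdecomp : M = U * Matrix.diagonal d * Uᵀ)
    (hincoh : ∀ i : Fin n,
      Real.sqrt (∑ j, (U i j) ^ 2) ≤ μ * Real.sqrt r / Real.sqrt n) :
    ∀ i j, |(M * B * M - M) i j| ≤ μ ^ 2 * r / n * opNorm (M * B * M - M) := by
  intro i j
  set P := U * Uᵀ with hP
  have hPM : P * M = M := hdecomp ▸ mul_transpose_mul_conj hU _
  have hMP : M * P = M := hdecomp ▸ conj_mul_mul_transpose hU _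
  have hPsymm : Pᵀ = P := by rw [hP, transpose_mul, transpose_transpose]
  have hE : Pᵀ * (M * B * M - M) * P = M * B * M - M := by
    rw [hPsymm, Matrix.mul_sub, Matrix.sub_mul, hPM, hMP,
      show P * (M * B * M) * P = P * M * B * (M * P) by simp only [Matrix.mul_assoc], hPM, hMP]
  have hrow : ∀ k, ‖toLp 2 (Pᵀ k)‖ ≤ μ * √r / √n := fun k => by
    rw [hPsymm, EuclideanSpace.norm_toLp_eq_sqrt_sum_sq, sum_sq_mul_transpose_apply hU]
    exact hincoh k
  have hop : 0 ≤ opNorm (M * B * M - M) := norm_nonneg _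
  calc |(M * B * M - M) i j|
      = |(Pᵀ * (M * B * M - M) * P) i j| := by rw [hE]
    _ ≤ ‖toLp 2 (Pᵀ i)‖ * opNorm (M * B * M - M) * ‖toLp 2 (Pᵀ j)‖ :=
        abs_transpose_mul_mul_apply_le _ _ _ i j
    _ ≤ (μ * √r / √n) * opNorm (M * B * M - M) * (μ * √r / √n) :=
        mul_le_mul (mul_le_mul_of_nonneg_right (hrow i) hop) (hrow j) (norm_nonneg _)
          (mul_nonneg ((norm_nonneg _).trans (hrow i)) hop)
    _ = μ ^ 2 * r / n * opNorm (M * B * M - M) := by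
        rw [mul_comm, ← mul_assoc, ← sq, div_pow, mul_pow, Real.sq_sqrt (Nat.cast_nonneg _),
          Real.sq_sqrt (Nat.cast_nonneg _)]

/-- If `M` is a symmetric `μ`-incoherent rank-`r` matrix with eigendecomposition
`M = U Σ Uᵀ`, then for any symmetric `B`,
`‖M B M − M‖_∞ ≤ (μ² r / n) ‖M B M − M‖₂`. -/
theorem stmt0 (n r : ℕ) (μ : ℝ) (M B : Matrix (Fin n) (Fin n) ℝ)
    (U : Matrix (Fin n) (Fin r) ℝ) (d : Fin r → ℝ)
    (hM : M.IsSymm) (hB : B.IsSymm)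
    (hU : Uᵀ * U = 1)
    (hdecomp : M = U * Matrix.diagonal d * Uᵀ)
    (hincoh : ∀ i : Fin n,
      Real.sqrt (∑ j, (U i j) ^ 2) ≤ μ * Real.sqrt r / Real.sqrt n) :
    ∀ i j, |(M * B * M - M) i j| ≤ μ ^ 2 * r / n * opNorm (M * B * M - M) :=
  stmt0_general n r μ M B U d hU hdecomp hincoh
end

section
/- Let A ∈ ℝ^{n×n} be a symmetric matrix with eigenvalues β₁,…,βₙ ordered so that |β₁| ≥ ⋯ ≥ |βₙ|, and suppose |β_k| > 0. Let E be a symmetric matrix with ‖E‖₂ < |β_k|/2, and let W = A + E. Let P_k(W) = U Λ Uᵀ be the eigendecomposition of the best rank-k approximation of W (top-k eigenvalues by magnitude). Then Λ is invertible, |λ_k| ≥ |β_k|/2, and ‖A − A U Λ⁻¹ Uᵀ A‖₂ ≤ |β_{k+1}| + 5‖E‖₂. -/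
/-!
Weyl's inequality for eigenvalues sorted by magnitude, `|λᵢ| ≤ |βᵢ| + ‖E‖` and symmetrically,
gives `|λ_k| ≥ |β_k| - ‖E‖ > |β_k|/2` and `|λ_{k+1}| ≤ |β_{k+1}| + ‖E‖`. With `Q = UΛ⁻¹Uᵀ` and
`A = W - E` one has `A - AQA = (W - WQW) - E + WQ·E + E·QW - EQE`, where `W - WQW = W - P_k(W)`
has norm `|λ_{k+1}|`, `WQ = QW = UUᵀ` is an orthogonal projection and `‖EQE‖ ≤ ‖E‖²/|λ_k| ≤ ‖E‖`.
All of `W`, `Q`, `WQ`, `WQW` are of the form `V D Vᵀ` with `D` diagonal, whose norm is `maxᵢ |Dᵢᵢ|`.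
-/

open Matrix

open scoped Matrix.Norms.L2Operator
open WithLp

lemma norm_sub_mul_mul_perturbation_le {R : Type*} [NormedRing R] (W E Q : R)
    (hWQ : ‖W * Q‖ ≤ 1) (hQW : ‖Q * W‖ ≤ 1) (hEQ : ‖E‖ * ‖Q‖ ≤ 1) :
    ‖(W - E) - (W - E) * Q * (W - E)‖ ≤ ‖W - W * Q * W‖ + 4 * ‖E‖ := by
  have hE := norm_nonneg E
  have h1 : ‖W * Q * E‖ ≤ ‖E‖ := (norm_mul_le _ _).trans (mul_le_of_le_one_left hE hWQ)
  have h2 : ‖E * (Q * W)‖ ≤ ‖E‖ := (norm_mul_le _ _).trans (mul_le_of_le_one_right hE hQW)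
  have h3 : ‖E * Q * E‖ ≤ ‖E‖ :=
    (norm_mul_le _ _).trans (mul_le_of_le_one_left hE ((norm_mul_le _ _).trans hEQ))
  rw [show (W - E) - (W - E) * Q * (W - E) =
      (W - W * Q * W) - E + W * Q * E + E * (Q * W) - E * Q * E by noncomm_ring]
  linarith [norm_sub_le (W - W * Q * W - E + W * Q * E + E * (Q * W)) (E * Q * E),
    norm_add_le (W - W * Q * W - E + W * Q * E) (E * (Q * W)),
    norm_add_le (W - W * Q * W - E) (W * Q * E), norm_sub_le (W - W * Q * W) E]

namespace Matrix

lemma submatrix_mul_diagonal_mul_transpose {m n o R : Type*} [Fintype n] [Fintype o]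
    [DecidableEq n] [DecidableEq o] [CommSemiring R] (V : Matrix m n R) {e : o → n}
    (he : Function.Injective e) (g : n → R) :
    V.submatrix id e * diagonal (g ∘ e) * (V.submatrix id e)ᵀ =
      V * diagonal ((Set.range e).indicator g) * Vᵀ := by
  ext a b
  rw [mul_apply, mul_apply]
  simp only [mul_diagonal]
  exact Fintype.sum_of_injective e he _ _
    (fun i hi => by simp [Set.indicator_of_notMem hi]) fun j => by simp

section Orthogonal

variable {n : Type*} [Fintype n] [DecidableEq n] {V : Matrix n n ℝ}

lemma norm_toLp_mulVec_of_transpose_mul_self (hV : Vᵀ * V = 1) (x : n → ℝ) :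
    ‖toLp 2 (V *ᵥ x)‖ = ‖toLp 2 x‖ := by
  have h : (V *ᵥ x) ⬝ᵥ (V *ᵥ x) = x ⬝ᵥ x := by
    rw [dotProduct_mulVec, ← mulVec_transpose, mulVec_mulVec, hV, one_mulVec]
  rw [← sq_eq_sq₀ (norm_nonneg _) (norm_nonneg _), ← real_inner_self_eq_norm_sq,
    ← real_inner_self_eq_norm_sq, EuclideanSpace.inner_toLp_toLp,
    EuclideanSpace.inner_toLp_toLp]
  simpa using h

lemma norm_toLp_transpose_mulVec_of_transpose_mul_self (hV : Vᵀ * V = 1) (x : n → ℝ) :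
    ‖toLp 2 (Vᵀ *ᵥ x)‖ = ‖toLp 2 x‖ :=
  norm_toLp_mulVec_of_transpose_mul_self
    (by rw [transpose_transpose]; exact mul_eq_one_comm.mp hV) x

lemma conj_diagonal_mul_conj_diagonal (hV : Vᵀ * V = 1) (a b : n → ℝ) :
    V * diagonal a * Vᵀ * (V * diagonal b * Vᵀ) = V * diagonal (a * b) * Vᵀ :=
  calc V * diagonal a * Vᵀ * (V * diagonal b * Vᵀ)
      = V * (diagonal a * (Vᵀ * V) * diagonal b) * Vᵀ := by simp only [Matrix.mul_assoc]
    _ = _ := by rw [hV, Matrix.mul_one, diagonal_mul_diagonal]; rfl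

lemma norm_conj_diagonal (hV : Vᵀ * V = 1) (d : n → ℝ) : ‖V * diagonal d * Vᵀ‖ = ‖d‖ := by
  have hVu : V ∈ unitary (Matrix n n ℝ) := (mem_orthogonalGroup_iff' n ℝ).mpr hV
  have hVtu : Vᵀ ∈ unitary (Matrix n n ℝ) := by
    simpa [star_eq_conjTranspose] using Unitary.star_mem hVu
  rw [CStarRing.norm_mul_mem_unitary _ hVtu, CStarRing.norm_mem_unitary_mul _ hVu,
    l2_opNorm_diagonal]

lemma norm_conj_diagonal_le (hV : Vᵀ * V = 1) {d : n → ℝ} {c : ℝ} (hc : 0 ≤ c)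
    (hd : ∀ i, |d i| ≤ c) : ‖V * diagonal d * Vᵀ‖ ≤ c := by
  rw [norm_conj_diagonal hV, pi_norm_le_iff_of_nonneg hc]
  exact hd

lemma mul_norm_toLp_le_norm_toLp_diagonal_mulVec {d x : n → ℝ} {c : ℝ} (hc : 0 ≤ c)
    (h : ∀ i, x i ≠ 0 → c ≤ |d i|) : c * ‖toLp 2 x‖ ≤ ‖toLp 2 (diagonal d *ᵥ x)‖ := by
  rw [← sq_le_sq₀ (by positivity) (norm_nonneg _), mul_pow, EuclideanSpace.real_norm_sq_eq,
    EuclideanSpace.real_norm_sq_eq, Finset.mul_sum]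
  refine Finset.sum_le_sum fun i _ => ?_
  simp only [mulVec_diagonal, mul_pow]
  by_cases hx : x i = 0
  · simp [hx]
  · rw [← sq_abs (d i)]
    gcongr
    exact h i hx

lemma norm_toLp_diagonal_mulVec_le {d x : n → ℝ} {c : ℝ} (hc : 0 ≤ c)
    (h : ∀ i, x i ≠ 0 → |d i| ≤ c) : ‖toLp 2 (diagonal d *ᵥ x)‖ ≤ c * ‖toLp 2 x‖ := by
  rw [← sq_le_sq₀ (norm_nonneg _) (by positivity), mul_pow, EuclideanSpace.real_norm_sq_eq,
    EuclideanSpace.real_norm_sq_eq, Finset.mul_sum]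
  refine Finset.sum_le_sum fun i _ => ?_
  simp only [mulVec_diagonal, mul_pow]
  by_cases hx : x i = 0
  · simp [hx]
  · rw [← sq_abs (d i)]
    gcongr
    exact h i hx

lemma norm_sub_mul_conj_indicator_inv_mul_le (hV : Vᵀ * V = 1) {lam : n → ℝ} {s : Set n}
    {E : Matrix n n ℝ} {c c' : ℝ} (hc : 0 < c) (hc' : 0 ≤ c') (hs : ∀ i ∈ s, c ≤ |lam i|)
    (hsc : ∀ i ∉ s, |lam i| ≤ c') (hE : ‖E‖ ≤ c) :
    ‖(V * diagonal lam * Vᵀ - E) -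
        (V * diagonal lam * Vᵀ - E) * (V * diagonal (s.indicator lam⁻¹) * Vᵀ) *
          (V * diagonal lam * Vᵀ - E)‖ ≤ c' + 4 * ‖E‖ := by
  have hWQ : ‖V * diagonal lam * Vᵀ * (V * diagonal (s.indicator lam⁻¹) * Vᵀ)‖ ≤ 1 := by
    rw [conj_diagonal_mul_conj_diagonal hV]
    refine norm_conj_diagonal_le hV zero_le_one fun i => ?_
    by_cases hi : i ∈ s
    · rcases eq_or_ne (lam i) 0 with h | h <;> simp [hi, h]
    · simp [hi]
  have hQW : ‖V * diagonal (s.indicator lam⁻¹) * Vᵀ * (V * diagonal lam * Vᵀ)‖ ≤ 1 := by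
    rwa [conj_diagonal_mul_conj_diagonal hV, mul_comm, ← conj_diagonal_mul_conj_diagonal hV]
  have hQ : ‖V * diagonal (s.indicator lam⁻¹) * Vᵀ‖ ≤ c⁻¹ := by
    refine norm_conj_diagonal_le hV (by positivity) fun i => ?_
    by_cases hi : i ∈ s
    · simpa [hi] using inv_anti₀ hc (hs i hi)
    · simpa [hi] using hc.le
  have hEQ : ‖E‖ * ‖V * diagonal (s.indicator lam⁻¹) * Vᵀ‖ ≤ 1 :=
    calc _ ≤ c * c⁻¹ := mul_le_mul hE hQ (norm_nonneg _) hc.le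
      _ = 1 := mul_inv_cancel₀ hc.ne'
  refine (norm_sub_mul_mul_perturbation_le _ _ _ hWQ hQW hEQ).trans (add_le_add_left ?_ _)
  rw [conj_diagonal_mul_conj_diagonal hV, conj_diagonal_mul_conj_diagonal hV, ← Matrix.sub_mul,
    ← Matrix.mul_sub, diagonal_sub]
  refine norm_conj_diagonal_le hV hc' fun i => ?_
  by_cases hi : i ∈ s
  · simpa [hi, mul_inv_mul_cancel] using hc'
  · simpa [hi] using hsc i hi

end Orthogonal

section Weyl

variable {ι : Type*} [Fintype ι] [DecidableEq ι] [LinearOrder ι]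

lemma exists_ne_zero_forall_mulVec_eq_zero {K : Type*} [Field K] (P Q : Matrix ι ι K) (m : ι) :
    ∃ x ≠ 0, (∀ i < m, (P *ᵥ x) i = 0) ∧ ∀ i, m < i → (Q *ᵥ x) i = 0 := by
  let B : Matrix ι ι K := of fun i j => if i < m then P i j else if m < i then Q i j else 0
  have hB : B.det = 0 := det_eq_zero_of_row_eq_zero m fun j => by simp [B]
  obtain ⟨x, hx0, hBx⟩ := exists_mulVec_eq_zero_iff.mpr hB
  refine ⟨x, hx0, fun i hi => ?_, fun i hi => ?_⟩
  · simpa [B, mulVec, dotProduct, hi] using congrFun hBx i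
  · simpa [B, mulVec, dotProduct, hi, hi.not_gt] using congrFun hBx i

theorem abs_le_abs_add_norm_of_conj_diagonal_eq {P V E : Matrix ι ι ℝ} {β lam : ι → ℝ}
    (hP : Pᵀ * P = 1) (hV : Vᵀ * V = 1) (hβ : Antitone fun i => |β i|)
    (hlam : Antitone fun i => |lam i|) (h : V * diagonal lam * Vᵀ = P * diagonal β * Pᵀ + E)
    (m : ι) : |lam m| ≤ |β m| + ‖E‖ := by
  -- `x` is orthogonal to the columns of `P` before `m` and to those of `V` after `m`, so
  -- `V diag(lam) Vᵀ` stretches it by at least `|lam m|` and `P diag(β) Pᵀ` by at most `|β m|`.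
  obtain ⟨x, hx0, hPx, hVx⟩ := exists_ne_zero_forall_mulVec_eq_zero Pᵀ Vᵀ m
  have conj_mulVec (Q : Matrix ι ι ℝ) (d : ι → ℝ) :
      (Q * diagonal d * Qᵀ) *ᵥ x = Q *ᵥ (diagonal d *ᵥ (Qᵀ *ᵥ x)) := by
    simp only [mulVec_mulVec, Matrix.mul_assoc]
  have hW : |lam m| * ‖toLp 2 x‖ ≤ ‖toLp 2 ((V * diagonal lam * Vᵀ) *ᵥ x)‖ := by
    rw [conj_mulVec, norm_toLp_mulVec_of_transpose_mul_self hV,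
      ← norm_toLp_transpose_mulVec_of_transpose_mul_self hV x]
    exact mul_norm_toLp_le_norm_toLp_diagonal_mulVec (abs_nonneg _) fun i hi =>
      hlam (le_of_not_gt fun hmi => hi (hVx i hmi))
  have hA : ‖toLp 2 ((P * diagonal β * Pᵀ) *ᵥ x)‖ ≤ |β m| * ‖toLp 2 x‖ := by
    rw [conj_mulVec, norm_toLp_mulVec_of_transpose_mul_self hP,
      ← norm_toLp_transpose_mulVec_of_transpose_mul_self hP x]
    exact norm_toLp_diagonal_mulVec_le (abs_nonneg _) fun i hi =>
      hβ (le_of_not_gt fun him => hi (hPx i him))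
  have hE : ‖toLp 2 (E *ᵥ x)‖ ≤ ‖E‖ * ‖toLp 2 x‖ := l2_opNorm_mulVec E (toLp 2 x)
  have hx : 0 < ‖toLp 2 x‖ := by simpa using hx0
  refine le_of_mul_le_mul_right ?_ hx
  calc |lam m| * ‖toLp 2 x‖ ≤ ‖toLp 2 ((P * diagonal β * Pᵀ) *ᵥ x) + toLp 2 (E *ᵥ x)‖ := by
        rwa [← toLp_add, ← add_mulVec, ← h]
    _ ≤ |β m| * ‖toLp 2 x‖ + ‖E‖ * ‖toLp 2 x‖ := (norm_add_le _ _).trans (add_le_add hA hE)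
    _ = (|β m| + ‖E‖) * ‖toLp 2 x‖ := by ring

end Weyl

end Matrix

lemma opNorm_eq_norm {n : ℕ} (A : Matrix (Fin n) (Fin n) ℝ) : opNorm A = ‖A‖ := rfl

/-- Let `A` be symmetric with eigenvalues `β` sorted by decreasing magnitude and
`|β_k| > 0`. Let `E` be symmetric with `‖E‖₂ < |β_k|/2` and `W = A + E`, with
eigendecomposition `W = V diag(lam) Vᵀ`, `lam` sorted by decreasing magnitude, so
that `P_k(W) = U Λ Uᵀ` where `U` is the first `k` columns of `V` and
`Λ = diag(lam₁,…,lam_k)`. Then `Λ` is invertible, `|λ_k| ≥ |β_k|/2`, and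
`‖A − A U Λ⁻¹ Uᵀ A‖₂ ≤ |β_{k+1}| + 5‖E‖₂`. -/
theorem stmt3 (n k : ℕ) (hkn : k < n)
    (A E : Matrix (Fin n) (Fin n) ℝ)
    (P V : Matrix (Fin n) (Fin n) ℝ) (β lam : Fin n → ℝ)
    (hP : Pᵀ * P = 1) (hAdecomp : A = P * Matrix.diagonal β * Pᵀ)
    (hβsorted : Antitone (fun i => |β i|))
    (hV : Vᵀ * V = 1) (hWdecomp : A + E = V * Matrix.diagonal lam * Vᵀ)
    (hlamsorted : Antitone (fun i => |lam i|))
    (hEnorm : opNorm E < |β ⟨k - 1, by omega⟩| / 2)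
    (U : Matrix (Fin n) (Fin k) ℝ)
    (hU : U = Matrix.of fun i (j : Fin k) => V i (Fin.castLE hkn.le j)) :
    (∀ j : Fin k, lam (Fin.castLE hkn.le j) ≠ 0) ∧
    |β ⟨k - 1, by omega⟩| / 2 ≤ |lam ⟨k - 1, by omega⟩| ∧
    opNorm (A - A * U *
        Matrix.diagonal (fun j : Fin k => (lam (Fin.castLE hkn.le j))⁻¹) * Uᵀ * A)
      ≤ |β ⟨k, hkn⟩| + 5 * opNorm E := by
  simp only [opNorm_eq_norm] at hEnorm ⊢
  set m : Fin n := ⟨k - 1, by omega⟩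
  have hweyl : ∀ i, |lam i| ≤ |β i| + ‖E‖ :=
    abs_le_abs_add_norm_of_conj_diagonal_eq hP hV hβsorted hlamsorted
      (by rw [← hWdecomp, hAdecomp])
  have hweyl' (i : Fin n) : |β i| ≤ |lam i| + ‖E‖ := by
    simpa using abs_le_abs_add_norm_of_conj_diagonal_eq hV hP hlamsorted hβsorted (E := -E)
      (by rw [← hWdecomp, hAdecomp]; abel) i
  have hlam_m : |β m| / 2 ≤ |lam m| := by linarith [hweyl' m]
  have hlam_m_pos : 0 < |lam m| := by linarith [norm_nonneg E]
  have hlam_head (j : Fin k) : |lam m| ≤ |lam (Fin.castLE hkn.le j)| :=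
    hlamsorted (Fin.le_def.2 (show (j : ℕ) ≤ k - 1 by omega))
  have hne (j : Fin k) : lam (Fin.castLE hkn.le j) ≠ 0 := fun h0 =>
    hlam_m_pos.not_ge (by simpa [h0] using hlam_head j)
  refine ⟨hne, hlam_m, ?_⟩
  have hQ : U * diagonal (fun j : Fin k => (lam (Fin.castLE hkn.le j))⁻¹) * Uᵀ =
      V * diagonal ({i : Fin n | (i : ℕ) < k}.indicator lam⁻¹) * Vᵀ := by
    simp only [hU, ← Fin.range_castLE hkn.le]
    exact submatrix_mul_diagonal_mul_transpose V (Fin.castLE_injective hkn.le) lam⁻¹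
  have hA : A = V * diagonal lam * Vᵀ - E := eq_sub_of_add_eq hWdecomp
  calc ‖A - A * U * diagonal (fun j : Fin k => (lam (Fin.castLE hkn.le j))⁻¹) * Uᵀ * A‖
        ≤ |lam ⟨k, hkn⟩| + 4 * ‖E‖ := by
        rw [hA, Matrix.mul_assoc _ U, Matrix.mul_assoc _ (U * _), hQ]
        exact norm_sub_mul_conj_indicator_inv_mul_le hV hlam_m_pos (abs_nonneg _)
          (fun i hi => hlam_head ⟨i, hi⟩) (fun i hi => hlamsorted (Fin.le_def.2 (not_lt.1 hi)))
          (by linarith)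
    _ ≤ |β ⟨k, hkn⟩| + 5 * ‖E‖ := by linarith [hweyl ⟨k, hkn⟩]
end

section
/- There exists an absolute constant c > 0 with the following property. Let A be a symmetric n×n matrix with σ_{k+1}(A) ≤ σ_k(A)/4, and let E be a symmetric matrix with ‖E‖_F < σ_k(A)/4. Then ‖P_k(A+E) − P_k(A)‖_F ≤ c·(√k·‖E‖₂ + ‖E‖_F), where P_k denotes the best rank-k approximation. -/
/-!
Write `A = U diag(α) Uᵀ`, `A + E = V diag(β) Vᵀ` and `W = Uᵀ V`. Then `Uᵀ E V` has entries
`W i j * (β j - α i)`, while `Uᵀ (P_k(A+E) - P_k(A)) V` has entries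
`W i j * (β j [j < k] - α i [i < k])`. By Weyl's inequality the `|β j|` are within `‖E‖₂ < s/4`
of the `|α j|`, where `s = |α (k-1)|`, so the top `k` and the bottom eigenvalues of `A` and of
`A + E` are separated by a factor `2`. Hence each entry of the second matrix is at most twice the
corresponding entry of `Uᵀ E V`, and it vanishes outside the first `k` rows and columns. A row or
column of `Uᵀ E V` has norm at most `‖E‖₂`, so `‖P_k(A+E) - P_k(A)‖_F² ≤ 8 k ‖E‖₂²`.
-/

open Matrix

noncomputable def frobNorm {m n : ℕ} (A : Matrix (Fin m) (Fin n) ℝ) : ℝ :=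
  Real.sqrt (∑ i, ∑ j, (A i j) ^ 2)

open WithLp
open scoped Matrix.Norms.L2Operator

theorem norm_toLp_le_norm_toLp {ι : Type*} [Fintype ι] {u v : ι → ℝ} (h : ∀ i, |u i| ≤ |v i|) :
    ‖toLp 2 u‖ ≤ ‖toLp 2 v‖ := by
  refine (sq_le_sq₀ (norm_nonneg _) (norm_nonneg _)).mp ?_
  simp only [EuclideanSpace.real_norm_sq_eq]
  exact Finset.sum_le_sum fun i _ => sq_le_sq.mpr (h i)

namespace Matrix

section Orthogonal

variable {ι : Type*} [Fintype ι] [DecidableEq ι] {U V : Matrix ι ι ℝ}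

theorem mem_unitaryGroup_of_transpose_mul_self (hU : Uᵀ * U = 1) : U ∈ unitaryGroup ι ℝ := by
  rwa [mem_unitaryGroup_iff', star_eq_conjTranspose, conjTranspose_eq_transpose_of_trivial]

theorem transpose_mem_unitaryGroup (hU : U ∈ unitaryGroup ι ℝ) : Uᵀ ∈ unitaryGroup ι ℝ := by
  simpa [star_eq_conjTranspose] using Unitary.star_mem hU

theorem norm_toLp_mulVec_of_mem_unitaryGroup (hU : U ∈ unitaryGroup ι ℝ) (x : ι → ℝ) :
    ‖toLp 2 (U *ᵥ x)‖ = ‖toLp 2 x‖ := by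
  simpa using ContinuousLinearMap.norm_map_of_mem_unitary
    (Unitary.map_mem (toEuclideanCLM (n := ι) (𝕜 := ℝ)) hU) (toLp 2 x)

theorem l2_opNorm_transpose_mul_mul_of_transpose_mul_self (hU : Uᵀ * U = 1) (hV : Vᵀ * V = 1)
    (E : Matrix ι ι ℝ) : ‖Uᵀ * E * V‖ = ‖E‖ := by
  rw [CStarRing.norm_mul_mem_unitary _ (mem_unitaryGroup_of_transpose_mul_self hV)]
  exact CStarRing.norm_mem_unitary_mul _
    (transpose_mem_unitaryGroup (mem_unitaryGroup_of_transpose_mul_self hU))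

theorem transpose_mul_sub_mul_entry (a b : ι → ℝ) (i j : ι) (hU : Uᵀ * U = 1) (hV : Vᵀ * V = 1) :
    (Uᵀ * (V * diagonal b * Vᵀ - U * diagonal a * Uᵀ) * V) i j = (Uᵀ * V) i j * (b j - a i) := by
  have hconj : Uᵀ * (V * diagonal b * Vᵀ - U * diagonal a * Uᵀ) * V
      = Uᵀ * V * diagonal b * (Vᵀ * V) - Uᵀ * U * diagonal a * (Uᵀ * V) := by
    simp only [mul_sub, sub_mul, Matrix.mul_assoc]
  rw [hconj, hU, hV, Matrix.mul_one, Matrix.one_mul, sub_apply, mul_diagonal, diagonal_mul]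
  ring

theorem norm_toLp_mulVec_le_l2_opNorm {κ : Type*} [Fintype κ] (A : Matrix κ ι ℝ) (x : ι → ℝ) :
    ‖toLp 2 (A *ᵥ x)‖ ≤ ‖A‖ * ‖toLp 2 x‖ :=
  l2_opNorm_mulVec A (toLp 2 x)

theorem sum_sq_apply_le_l2_opNorm_sq {κ : Type*} [Fintype κ] (A : Matrix κ ι ℝ) (j : ι) :
    ∑ i, A i j ^ 2 ≤ ‖A‖ ^ 2 := by
  have hcol := norm_toLp_mulVec_le_l2_opNorm A (Pi.single j 1)
  rw [mulVec_single_one, PiLp.toLp_single, PiLp.norm_single, norm_one, mul_one] at hcol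
  simpa [EuclideanSpace.real_norm_sq_eq] using pow_le_pow_left₀ (norm_nonneg _) hcol 2

end Orthogonal

section Weyl

variable {ι : Type*} [Fintype ι] [LinearOrder ι]

theorem exists_ne_zero_mulVec_eq_zero_below_above {K : Type*} [Field K] (P Q : Matrix ι ι K)
    (j : ι) : ∃ x ≠ 0, (∀ i < j, (P *ᵥ x) i = 0) ∧ ∀ i, j < i → (Q *ᵥ x) i = 0 := by
  -- the conditions are the rows of a square matrix `N` whose row `j` vanishes, so `det N = 0`
  let N : Matrix ι ι K := of fun i => if i < j then P i else if j < i then Q i else 0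
  obtain ⟨x, hx, hNx⟩ :=
    exists_mulVec_eq_zero_iff.mpr (det_eq_zero_of_row_eq_zero (A := N) j fun l => by simp [N])
  refine ⟨x, hx, fun i hi => ?_, fun i hi => ?_⟩
  · simpa [N, mulVec, hi] using congrFun hNx i
  · simpa [N, mulVec, hi, hi.not_gt] using congrFun hNx i

/-- Weyl's inequality for singular values, tested on a vector in the span of the eigenvectors
`U eᵢ, i ≤ j` of the first matrix and of the eigenvectors `V eᵢ, i ≥ j` of the second. -/
theorem abs_le_abs_add_l2_opNorm_sub {U V : Matrix ι ι ℝ} {α β : ι → ℝ}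
    (hU : Uᵀ * U = 1) (hV : Vᵀ * V = 1) (hα : Antitone (fun i => |α i|))
    (hβ : Antitone (fun i => |β i|)) (j : ι) :
    |α j| ≤ |β j| + ‖V * diagonal β * Vᵀ - U * diagonal α * Uᵀ‖ := by
  obtain ⟨x, hx, hVx, hUx⟩ := exists_ne_zero_mulVec_eq_zero_below_above Vᵀ Uᵀ j
  have hdiag (v w : ι → ℝ) : diagonal v *ᵥ w = v * w := funext (mulVec_diagonal v w)
  have hU' := mem_unitaryGroup_of_transpose_mul_self hU
  have hV' := mem_unitaryGroup_of_transpose_mul_self hV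
  have hAx : |α j| * ‖toLp 2 x‖ ≤ ‖toLp 2 ((U * diagonal α * Uᵀ) *ᵥ x)‖ := by
    rw [← mulVec_mulVec, ← mulVec_mulVec, norm_toLp_mulVec_of_mem_unitaryGroup hU', hdiag,
      ← norm_toLp_mulVec_of_mem_unitaryGroup (transpose_mem_unitaryGroup hU') x,
      ← Real.norm_eq_abs, ← norm_smul, ← toLp_smul]
    refine norm_toLp_le_norm_toLp fun i => ?_
    rcases le_or_gt i j with hij | hij
    · simpa [abs_mul] using mul_le_mul_of_nonneg_right (hα hij) (abs_nonneg _)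
    · simp [hUx i hij]
  have hBx : ‖toLp 2 ((V * diagonal β * Vᵀ) *ᵥ x)‖ ≤ |β j| * ‖toLp 2 x‖ := by
    rw [← mulVec_mulVec, ← mulVec_mulVec, norm_toLp_mulVec_of_mem_unitaryGroup hV', hdiag,
      ← norm_toLp_mulVec_of_mem_unitaryGroup (transpose_mem_unitaryGroup hV') x,
      ← Real.norm_eq_abs, ← norm_smul, ← toLp_smul]
    refine norm_toLp_le_norm_toLp fun i => ?_
    rcases lt_or_ge i j with hij | hij
    · simp [hVx i hij]
    · simpa [abs_mul] using mul_le_mul_of_nonneg_right (hβ hij) (abs_nonneg _)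
  have hx : 0 < ‖toLp 2 x‖ := norm_pos_iff.mpr (by simpa using hx)
  refine le_of_mul_le_mul_right ?_ hx
  calc |α j| * ‖toLp 2 x‖ ≤ ‖toLp 2 ((U * diagonal α * Uᵀ) *ᵥ x)‖ := hAx
    _ ≤ ‖toLp 2 ((V * diagonal β * Vᵀ) *ᵥ x)‖
          + ‖toLp 2 ((V * diagonal β * Vᵀ - U * diagonal α * Uᵀ) *ᵥ x)‖ := by
      rw [sub_mulVec, toLp_sub]
      exact norm_le_norm_add_norm_sub _ _
    _ ≤ (|β j| + ‖V * diagonal β * Vᵀ - U * diagonal α * Uᵀ‖) * ‖toLp 2 x‖ := by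
      rw [add_mul]
      exact add_le_add hBx (norm_toLp_mulVec_le_l2_opNorm _ x)

theorem abs_sub_abs_le_l2_opNorm_sub {U V : Matrix ι ι ℝ} {α β : ι → ℝ} (hU : Uᵀ * U = 1)
    (hV : Vᵀ * V = 1) (hα : Antitone (fun i => |α i|)) (hβ : Antitone (fun i => |β i|)) (j : ι) :
    |(|α j| - |β j|)| ≤ ‖V * diagonal β * Vᵀ - U * diagonal α * Uᵀ‖ := by
  have hαβ := abs_le_abs_add_l2_opNorm_sub hU hV hα hβ j
  have hβα := abs_le_abs_add_l2_opNorm_sub hV hU hβ hα j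
  rw [norm_sub_rev] at hβα
  exact abs_sub_le_iff.mpr ⟨by linarith, by linarith⟩

end Weyl

end Matrix
section Frobenius

variable {m n : ℕ}

theorem opNorm_eq_l2_opNorm (A : Matrix (Fin n) (Fin n) ℝ) : opNorm A = ‖A‖ := rfl

theorem frobNorm_nonneg (A : Matrix (Fin m) (Fin n) ℝ) : 0 ≤ frobNorm A := Real.sqrt_nonneg _

theorem opNorm_le_frobNorm (A : Matrix (Fin n) (Fin n) ℝ) : opNorm A ≤ frobNorm A := by
  refine ContinuousLinearMap.opNorm_le_bound _ (frobNorm_nonneg A) fun x => ?_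
  refine (sq_le_sq₀ (norm_nonneg _) (mul_nonneg (frobNorm_nonneg A) (norm_nonneg _))).mp ?_
  rw [mul_pow, frobNorm, Real.sq_sqrt (by positivity), EuclideanSpace.real_norm_sq_eq,
    EuclideanSpace.real_norm_sq_eq, Finset.sum_mul]
  refine Finset.sum_le_sum fun i _ => ?_
  simpa [mulVec, dotProduct] using Finset.sum_mul_sq_le_sq_mul_sq Finset.univ (A i) x.ofLp

theorem frobNorm_eq_sqrt_trace (A : Matrix (Fin m) (Fin n) ℝ) :
    frobNorm A = √(A * Aᵀ).trace := by
  simp [frobNorm, trace, mul_apply, sq]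

theorem frobNorm_transpose_mul_mul_of_mul_transpose {U : Matrix (Fin m) (Fin m) ℝ}
    {V : Matrix (Fin n) (Fin n) ℝ} (hU : U * Uᵀ = 1) (hV : V * Vᵀ = 1)
    (A : Matrix (Fin m) (Fin n) ℝ) : frobNorm (Uᵀ * A * V) = frobNorm A := by
  rw [frobNorm_eq_sqrt_trace, frobNorm_eq_sqrt_trace, transpose_mul, transpose_mul,
    transpose_transpose]
  congr 1
  calc (Uᵀ * A * V * (Vᵀ * (Aᵀ * U))).trace = (Uᵀ * (A * (V * Vᵀ) * Aᵀ) * U).trace := by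
        simp only [Matrix.mul_assoc]
    _ = (U * Uᵀ * (A * Aᵀ)).trace := by
        rw [hV, Matrix.mul_one, trace_mul_comm, ← Matrix.mul_assoc]
    _ = (A * Aᵀ).trace := by rw [hU, Matrix.one_mul]

end Frobenius

section Truncation

variable {m n : ℕ}

theorem sum_sum_ite_col_sq_le (F : Matrix (Fin m) (Fin n) ℝ) (k : ℕ) :
    ∑ i, ∑ j : Fin n, (if j.1 < k then F i j ^ 2 else 0) ≤ k * ‖F‖ ^ 2 := by
  rw [Finset.sum_comm]
  simp only [Finset.sum_ite_irrel, Finset.sum_const_zero, ← Finset.sum_filter]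
  calc ∑ j ∈ {j : Fin n | j.1 < k}, ∑ i, F i j ^ 2 ≤ ∑ j ∈ {j : Fin n | j.1 < k}, ‖F‖ ^ 2 :=
        Finset.sum_le_sum fun j _ => sum_sq_apply_le_l2_opNorm_sq F j
    _ ≤ k * ‖F‖ ^ 2 := by
        rw [Finset.sum_const, Fin.card_filter_val_lt, nsmul_eq_mul]
        gcongr
        exact_mod_cast min_le_right n k

theorem sum_sum_ite_row_sq_le (F : Matrix (Fin m) (Fin n) ℝ) (k : ℕ) :
    ∑ i : Fin m, ∑ j, (if i.1 < k then F i j ^ 2 else 0) ≤ k * ‖F‖ ^ 2 := by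
  have h := sum_sum_ite_col_sq_le Fᵀ k
  rwa [← conjTranspose_eq_transpose_of_trivial, l2_opNorm_conjTranspose, Finset.sum_comm] at h

theorem sq_le_four_mul_sq_sub {a b : ℝ} (h : |a| ≤ |b| / 2) : b ^ 2 ≤ 4 * (b - a) ^ 2 := by
  have hb : |b| ≤ 2 * |b - a| := by linarith [abs_sub_abs_le_abs_sub b a]
  calc b ^ 2 = |b| ^ 2 := (sq_abs b).symm
    _ ≤ (2 * |b - a|) ^ 2 := pow_le_pow_left₀ (abs_nonneg b) hb 2
    _ = 4 * (b - a) ^ 2 := by rw [mul_pow, sq_abs]; norm_num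

theorem sq_mul_ite_sub_ite_le {p q : Prop} [Decidable p] [Decidable q] (w a b : ℝ)
    (hpq : p → ¬q → |a| ≤ |b| / 2) (hqp : ¬p → q → |b| ≤ |a| / 2) :
    (w * ((if p then b else 0) - (if q then a else 0))) ^ 2 ≤
      4 * ((if p then (w * (b - a)) ^ 2 else 0) + (if q then (w * (b - a)) ^ 2 else 0)) := by
  by_cases hp : p <;> by_cases hq : q <;> simp only [hp, hq, if_true, if_false, mul_pow]
  · nlinarith [mul_nonneg (sq_nonneg w) (sq_nonneg (b - a))]
  · nlinarith [mul_le_mul_of_nonneg_left (sq_le_four_mul_sq_sub (hpq hp hq)) (sq_nonneg w)]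
  · rw [← sub_sq_comm]
    nlinarith [mul_le_mul_of_nonneg_left (sq_le_four_mul_sq_sub (hqp hp hq)) (sq_nonneg w)]
  · simp

theorem frobNorm_sub_le_of_gap {k : ℕ} {U V : Matrix (Fin n) (Fin n) ℝ} {α β : Fin n → ℝ}
    (hU : Uᵀ * U = 1) (hV : Vᵀ * V = 1)
    (hα : ∀ i j : Fin n, k ≤ i.1 → j.1 < k → |α i| ≤ |β j| / 2)
    (hβ : ∀ i j : Fin n, i.1 < k → k ≤ j.1 → |β j| ≤ |α i| / 2) :
    frobNorm (V * diagonal (fun i => if i.1 < k then β i else 0) * Vᵀ -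
        U * diagonal (fun i => if i.1 < k then α i else 0) * Uᵀ)
      ≤ √(8 * k) * ‖V * diagonal β * Vᵀ - U * diagonal α * Uᵀ‖ := by
  set F := Uᵀ * (V * diagonal β * Vᵀ - U * diagonal α * Uᵀ) * V
  set M := Uᵀ * (V * diagonal (fun i => if i.1 < k then β i else 0) * Vᵀ -
        U * diagonal (fun i => if i.1 < k then α i else 0) * Uᵀ) * V
  have hentry (i j : Fin n) : M i j ^ 2 ≤
      4 * ((if j.1 < k then F i j ^ 2 else 0) + (if i.1 < k then F i j ^ 2 else 0)) := by
    rw [show M i j = _ from transpose_mul_sub_mul_entry _ _ i j hU hV,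
      show F i j = _ from transpose_mul_sub_mul_entry _ _ i j hU hV]
    exact sq_mul_ite_sub_ite_le _ _ _ (fun hj hi => hα i j (not_lt.mp hi) hj)
      (fun hj hi => hβ i j hi (not_lt.mp hj))
  have hsum : ∑ i, ∑ j, M i j ^ 2 ≤ 8 * k * ‖F‖ ^ 2 := by
    calc ∑ i, ∑ j, M i j ^ 2
        ≤ ∑ i, ∑ j, 4 * ((if j.1 < k then F i j ^ 2 else 0) + (if i.1 < k then F i j ^ 2 else 0)) :=
          Finset.sum_le_sum fun i _ => Finset.sum_le_sum fun j _ => hentry i j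
      _ = 4 * (∑ i, ∑ j : Fin n, (if j.1 < k then F i j ^ 2 else 0)
            + ∑ i : Fin n, ∑ j, (if i.1 < k then F i j ^ 2 else 0)) := by
          simp only [← Finset.mul_sum, ← Finset.sum_add_distrib]
      _ ≤ 4 * (k * ‖F‖ ^ 2 + k * ‖F‖ ^ 2) := by
          gcongr
          exacts [sum_sum_ite_col_sq_le F k, sum_sum_ite_row_sq_le F k]
      _ = 8 * k * ‖F‖ ^ 2 := by ring
  rw [← frobNorm_transpose_mul_mul_of_mul_transpose (mul_eq_one_comm.mp hU)
      (mul_eq_one_comm.mp hV), ← l2_opNorm_transpose_mul_mul_of_transpose_mul_self hU hV,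
    frobNorm, ← Real.sqrt_sq (norm_nonneg F), ← Real.sqrt_mul (by positivity)]
  exact Real.sqrt_le_sqrt hsum

end Truncation

/-- Davis–Kahan extension: there is an absolute constant `c > 0` such that for any
symmetric `A` with `σ_{k+1}(A) ≤ σ_k(A)/4` and any symmetric `E` with
`‖E‖_F < σ_k(A)/4`, the best rank-`k` approximations (truncated eigendecompositions
keeping the `k` largest-magnitude eigenvalues) satisfy
`‖P_k(A+E) − P_k(A)‖_F ≤ c (√k ‖E‖₂ + ‖E‖_F)`. -/
theorem stmt5 :
    ∃ c : ℝ, 0 < c ∧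
      ∀ (n k : ℕ) (hk1 : 1 ≤ k) (hkn : k < n)
        (A E VA VB : Matrix (Fin n) (Fin n) ℝ) (α β : Fin n → ℝ),
        A.IsSymm → E.IsSymm →
        VAᵀ * VA = 1 → A = VA * Matrix.diagonal α * VAᵀ →
        Antitone (fun i => |α i|) →
        VBᵀ * VB = 1 → A + E = VB * Matrix.diagonal β * VBᵀ →
        Antitone (fun i => |β i|) →
        |α ⟨k, hkn⟩| ≤ |α ⟨k - 1, by omega⟩| / 4 →
        frobNorm E < |α ⟨k - 1, by omega⟩| / 4 →
        frobNorm
            (VB * Matrix.diagonal (fun i : Fin n => if i.1 < k then β i else 0) * VBᵀ -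
              VA * Matrix.diagonal (fun i : Fin n => if i.1 < k then α i else 0) * VAᵀ)
          ≤ c * (Real.sqrt k * opNorm E + frobNorm E) := by
  refine ⟨3, by norm_num, fun n k _ hkn A E U V α β _ _ hU hA hα hV hB hβ hgap hE => ?_⟩
  set s := |α ⟨k - 1, by omega⟩|
  have hs : 0 ≤ s := abs_nonneg _
  have hEUV : E = V * diagonal β * Vᵀ - U * diagonal α * Uᵀ := by rw [← hB, hA]; abel
  have hEs : opNorm E < s / 4 := (opNorm_le_frobNorm E).trans_lt hE
  have hαtop (i : Fin n) (hi : i.1 < k) : s ≤ |α i| := hα (Fin.mk_le_mk.mpr (by omega))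
  have hαbot (i : Fin n) (hi : k ≤ i.1) : |α i| ≤ s / 4 := (hα (Fin.mk_le_mk.mpr hi)).trans hgap
  have hweyl (j : Fin n) : |(|α j| - |β j|)| ≤ opNorm E := by
    rw [opNorm_eq_l2_opNorm, hEUV]; exact abs_sub_abs_le_l2_opNorm_sub hU hV hα hβ j
  calc _ ≤ √(8 * k) * opNorm E := by
        rw [opNorm_eq_l2_opNorm, hEUV]
        refine frobNorm_sub_le_of_gap hU hV (fun i j hi hj => ?_) (fun i j hi hj => ?_)
        · linarith [hαbot i hi, hαtop j hj, hs, (abs_le.mp (hweyl j)).2]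
        · linarith [hαbot j hj, hαtop i hi, hs, (abs_le.mp (hweyl j)).1]
    _ ≤ 3 * (√k * opNorm E) := by
        rw [Real.sqrt_mul (by norm_num), mul_assoc]
        gcongr
        · exact mul_nonneg (Real.sqrt_nonneg _) (norm_nonneg _)
        · rw [Real.sqrt_le_left (by norm_num)]; norm_num
    _ ≤ 3 * (√k * opNorm E + frobNorm E) := by linarith [frobNorm_nonneg E]
end

section
/- Let A be a symmetric n×n real matrix and let Ω ⊆ [n]×[n] be obtained by including each pair (i,j) independently with probability p ∈ [1/(4n), 1/2]. Define B := (√p / (2√n·‖A‖_∞))·(A − (1/p)·P_Ω(A)), where P_Ω(A) zeroes out entries outside Ω. Then each entry B_{ij} satisfies: E[B_{ij}] = 0, |B_{ij}| < 1 almost surely, and E[|B_{ij}|^k] ≤ 1/n for every integer 2 ≤ k ≤ 2 log n. -/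
/-!
With `a = A i j`, `M = ‖A‖_∞` and `s = √p / (2√n M)`, the entry `B i j` takes only the two values
`s (a - a/p)` (probability `p`) and `s a` (probability `1 - p`). Its mean vanishes because
`1 - ξ/p` is centred for a Bernoulli(`p`) variable `ξ`. Both values are smaller than `1` in absolute
value since `s² = p / (4 n M²)` and `n p ≥ 1/4`; hence `|B i j|^k ≤ |B i j|²` for `k ≥ 2`, and
`E (B i j)² = a² (1 - p) / (4 n M²) ≤ 1/(4n)`.
-/

open Matrix MeasureTheory ProbabilityTheory

section TwoPoint

variable {Ω : Type*} [MeasurableSpace Ω] {μ : Measure Ω} [IsProbabilityMeasure μ]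
  {S : Set Ω} [DecidablePred (· ∈ S)]

theorem integral_ite_mem_const (hS : MeasurableSet S) (x y : ℝ) :
    ∫ ω, (if ω ∈ S then x else y) ∂μ = μ.real S * x + (1 - μ.real S) * y := by
  rw [← probReal_compl_eq_one_sub hS, ← smul_eq_mul, ← smul_eq_mul (μ.real Sᶜ),
    ← setIntegral_const, ← setIntegral_const]
  exact integral_piecewise hS integrableOn_const integrableOn_const

theorem integral_abs_pow_ite_mem_le (hS : MeasurableSet S) {x y : ℝ} (hx : |x| ≤ 1)
    (hy : |y| ≤ 1) {k : ℕ} (hk : 2 ≤ k) :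
    ∫ ω, |if ω ∈ S then x else y| ^ k ∂μ ≤ μ.real S * x ^ 2 + (1 - μ.real S) * y ^ 2 := by
  have hpow : ∀ ω, |if ω ∈ S then x else y| ^ k = if ω ∈ S then |x| ^ k else |y| ^ k := by
    intro ω; split_ifs <;> rfl
  simp_rw [hpow, integral_ite_mem_const hS, ← sq_abs x, ← sq_abs y]
  exact add_le_add
    (mul_le_mul_of_nonneg_left (pow_le_pow_of_le_one (abs_nonneg x) hx hk) measureReal_nonneg)
    (mul_le_mul_of_nonneg_left (pow_le_pow_of_le_one (abs_nonneg y) hy hk)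
      (sub_nonneg.2 measureReal_le_one))

end TwoPoint

section RescaledError

variable {n p M a s : ℝ}

theorem sq_sqrt_div_two_sqrt_mul (hp : 0 ≤ p) (hn : 0 ≤ n) (M : ℝ) :
    (√p / (2 * √n * M)) ^ 2 = p / (4 * n * M ^ 2) := by
  rw [div_pow, mul_pow, mul_pow, Real.sq_sqrt hp, Real.sq_sqrt hn]
  norm_num

theorem sampling_error_mean_eq_zero (hp : p ≠ 0) (s a : ℝ) :
    p * (s * (a - 1 / p * a)) + (1 - p) * (s * a) = 0 := by
  field_simp
  ring

variable (hs : s ^ 2 = p / (4 * n * M ^ 2)) (hp : 0 < p) (hM : 0 < M) (ha : |a| ≤ M)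
include hs hp hM ha

theorem abs_sampled_error_lt_one (hp1 : p < 1) (hnp : 1 / 4 ≤ n * p) :
    |s * (a - 1 / p * a)| < 1 := by
  have hn : 0 < n := pos_of_mul_pos_left (by linarith) hp.le
  have ha2 : a ^ 2 ≤ M ^ 2 := sq_le_sq' (abs_le.1 ha).1 (abs_le.1 ha).2
  have hsq : (s * (a - 1 / p * a)) ^ 2 = a ^ 2 * (1 - p) ^ 2 / (4 * n * p * M ^ 2) := by
    rw [mul_pow, hs]
    field_simp
    ring
  rw [← sq_lt_one_iff_abs_lt_one, hsq, div_lt_one (by positivity)]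
  calc a ^ 2 * (1 - p) ^ 2 ≤ M ^ 2 * (1 - p) ^ 2 := by gcongr
    _ < M ^ 2 * 1 := by gcongr; nlinarith
    _ ≤ 4 * n * p * M ^ 2 := by nlinarith [sq_pos_of_pos hM]

theorem abs_unsampled_error_lt_one (hp1 : p < 1) (hnp : 1 / 4 ≤ n * p) : |s * a| < 1 := by
  have hn : 0 < n := pos_of_mul_pos_left (by linarith) hp.le
  have ha2 : a ^ 2 ≤ M ^ 2 := sq_le_sq' (abs_le.1 ha).1 (abs_le.1 ha).2
  rw [← sq_lt_one_iff_abs_lt_one, mul_pow, hs, div_mul_eq_mul_div, div_lt_one (by positivity)]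
  calc p * a ^ 2 ≤ p * M ^ 2 := by gcongr
    _ < 1 * M ^ 2 := by gcongr
    _ ≤ 4 * n * M ^ 2 := by nlinarith [sq_pos_of_pos hM]

theorem sampling_error_second_moment_le (hn : 0 < n) :
    p * (s * (a - 1 / p * a)) ^ 2 + (1 - p) * (s * a) ^ 2 ≤ 1 / n := by
  have ha2 : a ^ 2 ≤ M ^ 2 := sq_le_sq' (abs_le.1 ha).1 (abs_le.1 ha).2
  have hmoment : p * (s * (a - 1 / p * a)) ^ 2 + (1 - p) * (s * a) ^ 2
      = a ^ 2 * (1 - p) / (4 * n * M ^ 2) := by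
    rw [mul_pow, mul_pow, hs]
    field_simp
    ring
  rw [hmoment, div_le_div_iff₀ (by positivity) hn]
  have hbound : a ^ 2 * (1 - p) ≤ M ^ 2 := by nlinarith [sq_nonneg a]
  nlinarith [mul_le_mul_of_nonneg_right hbound hn.le, sq_nonneg M]

end RescaledError

theorem stmt6_general (n : ℕ) (A : Matrix (Fin n) (Fin n) ℝ)
    (Amax : ℝ) (hAmax : Amax = ⨆ i, ⨆ j, |A i j|) (hApos : 0 < Amax)
    (p : ℝ) (hp1 : 1 / (4 * n) ≤ p) (hp2 : p ≤ 1 / 2)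
    (Ω : Type*) [MeasurableSpace Ω] (μ : Measure Ω) [IsProbabilityMeasure μ]
    (χ : Fin n × Fin n → Ω → Bool)
    (hmeas : ∀ q, Measurable (χ q))
    (hbern : ∀ q, μ (χ q ⁻¹' {true}) = ENNReal.ofReal p)
    (B : Fin n → Fin n → Ω → ℝ)
    (hB : ∀ i j ω, B i j ω = Real.sqrt p / (2 * Real.sqrt n * Amax) *
      (A i j - (1 / p) * (if χ (i, j) ω then A i j else 0))) :
    ∀ i j : Fin n,
      (∫ ω, B i j ω ∂μ) = 0 ∧
      (∀ᵐ ω ∂μ, |B i j ω| < 1) ∧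
      (∀ k : ℕ, 2 ≤ k → (k : ℝ) ≤ 2 * Real.log n →
        (∫ ω, |B i j ω| ^ k ∂μ) ≤ 1 / n) := by
  classical
  intro i j
  have hn : (0 : ℝ) < n := by exact_mod_cast i.pos
  have hp : 0 < p := (by positivity : (0 : ℝ) < 1 / (4 * n)).trans_le hp1
  have hnp : 1 / 4 ≤ n * p := by
    rw [div_le_iff₀ (by positivity)] at hp1
    linarith
  have ha : |A i j| ≤ Amax := hAmax ▸
    (Finite.le_ciSup (fun j => |A i j|) j).trans (Finite.le_ciSup (fun i => ⨆ j, |A i j|) i)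
  have hs := sq_sqrt_div_two_sqrt_mul hp.le hn.le Amax
  set s := √p / (2 * √n * Amax)
  set S := χ (i, j) ⁻¹' {true}
  have hS : MeasurableSet S := hmeas (i, j) (measurableSet_singleton true)
  have hμS : μ.real S = p := by simp [measureReal_def, S, hbern, hp.le]
  have hBS : ∀ ω, B i j ω = if ω ∈ S then s * (A i j - 1 / p * A i j) else s * A i j := by
    intro ω
    by_cases h : χ (i, j) ω <;> simp [hB, S, h]
  have hp_lt_one : p < 1 := by linarith
  have hhit := abs_sampled_error_lt_one hs hp hApos ha hp_lt_one hnp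
  have hmiss := abs_unsampled_error_lt_one hs hp hApos ha hp_lt_one hnp
  simp only [hBS]
  refine ⟨?_, .of_forall fun ω => ?_, fun k hk _ => ?_⟩
  · rw [integral_ite_mem_const hS, hμS, sampling_error_mean_eq_zero hp.ne']
  · split_ifs <;> assumption
  · have hmoment := integral_abs_pow_ite_mem_le (μ := μ) hS hhit.le hmiss.le hk
    rw [hμS] at hmoment
    exact hmoment.trans (sampling_error_second_moment_le hs hp hApos ha hn)

/-- Rescaled sampling error matrix has centered entries, entries bounded by 1, and
moments `E|B_{ij}|^k ≤ 1/n` for `2 ≤ k ≤ 2 log n`. -/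
theorem stmt6 (n : ℕ) (hn : 0 < n) (A : Matrix (Fin n) (Fin n) ℝ) (hA : A.IsSymm)
    (Amax : ℝ) (hAmax : Amax = ⨆ i, ⨆ j, |A i j|) (hApos : 0 < Amax)
    (p : ℝ) (hp1 : 1 / (4 * n) ≤ p) (hp2 : p ≤ 1 / 2)
    (Ω : Type*) [MeasurableSpace Ω] (μ : Measure Ω) [IsProbabilityMeasure μ]
    (χ : Fin n × Fin n → Ω → Bool)
    (hmeas : ∀ q, Measurable (χ q))
    (hindep : iIndepFun χ μ)
    (hbern : ∀ q, μ (χ q ⁻¹' {true}) = ENNReal.ofReal p)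
    (B : Fin n → Fin n → Ω → ℝ)
    (hB : ∀ i j ω, B i j ω = Real.sqrt p / (2 * Real.sqrt n * Amax) *
      (A i j - (1 / p) * (if χ (i, j) ω then A i j else 0))) :
    ∀ i j : Fin n,
      (∫ ω, B i j ω ∂μ) = 0 ∧
      (∀ᵐ ω ∂μ, |B i j ω| < 1) ∧
      (∀ k : ℕ, 2 ≤ k → (k : ℝ) ≤ 2 * Real.log n →
        (∫ ω, |B i j ω| ^ k ∂μ) ≤ 1 / n) :=
  stmt6_general n A Amax hAmax hApos p hp1 hp2 Ω μ χ hmeas hbern B hB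
end

section
/- Let Ĥ be a random symmetric n×n matrix satisfying: entries are independent (up to symmetry), E[ĥᵢⱼ]=0, |ĥᵢⱼ|<1, and E[|ĥᵢⱼ|^k] ≤ 1/n for 2 ≤ k ≤ 2 log n. Fix an integer 1 ≤ a ≤ log n, a fixed vector u ∈ ℝⁿ, and a constant c > 4. Then with probability at least 1 − n^{1 − 2 log(c/4)}, for every standard basis vector e_r (r ∈ [n]): |⟨e_r, Ĥᵃ u⟩| ≤ (c log n)ᵃ · ‖u‖_∞. -/
/-!
Moment method. Expand `(Ĥᵃ u)_r ^ K` as a sum over `K`-tuples of walks of length `a` starting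
at `r`. By independence and centering, a tuple that traverses some edge exactly once has zero
expectation; any other tuple contributes at most `‖u‖_∞ ^ K n ^ (-d)`, where the number `d` of
distinct edges is at least the number `v` of distinct vertices other than `r` that are visited.
Summing `n ^ (-v)` over all tuples gives at most `(Ka + 1) ^ (Ka)`, so
`E (Ĥᵃ u)_r ^ K ≤ ‖u‖_∞ ^ K (Ka + 1) ^ (Ka)`. Markov's inequality with an even `K` such that
`2 log n ≤ Ka ≤ 4 log n` and a union bound over `r` finish the proof.
-/

open Finset Matrix MeasureTheory ProbabilityTheory

namespace Matrix

variable {ι R : Type*} [Fintype ι] [DecidableEq ι] [CommSemiring R]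

theorem pow_mulVec_apply_eq_sum_walks (M : Matrix ι ι R) (u : ι → R) (a : ℕ) (r : ι) :
    (M ^ a *ᵥ u) r = ∑ p : Fin a → ι,
      (∏ i, M ((Fin.cons r p : Fin (a + 1) → ι) i.castSucc) (p i)) *
        u ((Fin.cons r p : Fin (a + 1) → ι) (Fin.last a)) := by
  induction a generalizing r with
  | zero => simp
  | succ a ih =>
    rw [pow_succ', ← mulVec_mulVec, mulVec, dotProduct,
      ← (Fin.consEquiv fun _ => ι).sum_comp, Fintype.sum_prod_type]
    refine sum_congr rfl fun j _ => ?_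
    rw [ih, mul_sum]
    refine sum_congr rfl fun p _ => ?_
    simp only [Fin.consEquiv_apply, Fin.prod_univ_succ, Fin.castSucc_zero, Fin.cons_zero,
      Fin.cons_succ, ← Fin.succ_castSucc, ← Fin.succ_last]
    ring

theorem pow_mulVec_apply_pow_eq_sum (M : Matrix ι ι R) (u : ι → R) (a K : ℕ) (r : ι) :
    (M ^ a *ᵥ u) r ^ K = ∑ g : Fin K → Fin a → ι,
      (∏ j, u ((Fin.cons r (g j) : Fin (a + 1) → ι) (Fin.last a))) *
        ∏ p : Fin K × Fin a,
          M ((Fin.cons r (g p.1) : Fin (a + 1) → ι) p.2.castSucc) (g p.1 p.2) := by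
  rw [pow_mulVec_apply_eq_sum_walks, ← Fin.prod_const, prod_univ_sum, Fintype.piFinset_univ]
  refine sum_congr rfl fun g _ => ?_
  rw [prod_mul_distrib, Fintype.prod_prod_type, mul_comm]

end Matrix

theorem card_erase_image_le_card_image_sym2 {P ι : Type*} [Fintype P] [DecidableEq ι]
    (src tgt : P → ι) (r : ι) (time : P → ℕ)
    (hsrc : ∀ p, src p = r ∨ ∃ p', time p' < time p ∧ tgt p' = src p) :
    #((univ.image tgt).erase r) ≤ #(univ.image fun p => s(src p, tgt p)) := by
  cases isEmpty_or_nonempty P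
  · simp
  have hfirst : ∀ y ∈ (univ.image tgt).erase r,
      ∃ p, tgt p = y ∧ ∀ p', tgt p' = y → time p ≤ time p' := by
    intro y hy
    obtain ⟨p, hp, hmin⟩ := exists_min_image {p | tgt p = y} time <| by
      simpa [Finset.Nonempty] using (mem_image.1 (mem_of_mem_erase hy))
    exact ⟨p, (mem_filter.1 hp).2, fun p' hp' => hmin p' (by simpa using hp')⟩
  choose! first hfirst_tgt hfirst_min using hfirst
  -- Each non-root vertex is charged to the edge along which it is first reached.
  refine card_le_card_of_injOn (fun y => s(src (first y), y))
    (fun y hy => mem_image.2 ⟨first y, mem_univ _, by rw [hfirst_tgt y hy]⟩) ?_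
  intro y hy z hz hyz
  by_contra hne
  have hzy : z = src (first y) ∧ y = src (first z) := by
    rcases Sym2.eq_iff.1 hyz with h | h
    · exact absurd h.2 hne
    · exact ⟨h.1.symm, h.2⟩
  have hearlier : ∀ y ∈ (univ.image tgt).erase r, ∀ z ∈ (univ.image tgt).erase r,
      z = src (first y) → time (first z) < time (first y) := by
    intro y hy z hz hz_src
    rcases hsrc (first y) with h | ⟨p', hp', hp'_tgt⟩
    · exact absurd (hz_src.trans h) (ne_of_mem_erase hz)
    · exact (hfirst_min z hz p' (hp'_tgt.trans hz_src.symm)).trans_lt hp'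
  exact lt_asymm (hearlier y hy z hz hzy.1) (hearlier z hz y hy hzy.2)

theorem card_erase_image_le_card_image_walk_edges {ι : Type*} [DecidableEq ι] (r : ι)
    {K a : ℕ} (g : Fin K → Fin a → ι) :
    #((univ.image fun p : Fin K × Fin a => g p.1 p.2).erase r)
      ≤ #(univ.image fun p : Fin K × Fin a =>
          s((Fin.cons r (g p.1) : Fin (a + 1) → ι) p.2.castSucc, g p.1 p.2)) := by
  -- Order the steps walk by walk; step `(j, i + 1)` leaves from where step `(j, i)` arrived.
  refine card_erase_image_le_card_image_sym2 _ _ r (fun p => p.1 * a + p.2) ?_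
  rintro ⟨j, i⟩
  rcases a with _ | a
  · exact i.elim0
  induction i using Fin.cases with
  | zero => exact Or.inl rfl
  | succ i => exact Or.inr ⟨(j, i.castSucc), by simp, by simp⟩

theorem sum_inv_card_pow_card_erase_insert_le {ι : Type*} [Fintype ι] [DecidableEq ι]
    (r : ι) (S : Finset ι) :
    ∑ x, ((Fintype.card ι : ℝ)⁻¹) ^ #((insert x S).erase r)
      ≤ (#S + 2) * ((Fintype.card ι : ℝ)⁻¹) ^ #(S.erase r) := by
  have : Nonempty ι := ⟨r⟩
  set q : ℝ := (Fintype.card ι : ℝ)⁻¹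
  have hcard : (Fintype.card ι : ℝ) * q = 1 :=
    mul_inv_cancel₀ (Nat.cast_ne_zero.2 Fintype.card_ne_zero)
  -- Inserting `x` adds a new non-root vertex only if `x ∉ insert r S`.
  have hterm : ∀ x, q ^ #((insert x S).erase r)
      ≤ (if x ∈ insert r S then q ^ #(S.erase r) else 0) + q * q ^ #(S.erase r) := by
    intro x
    split_ifs with hx
    · have : (insert x S).erase r = S.erase r := by
        rcases mem_insert.1 hx with rfl | hx
        · exact erase_insert_eq_erase _ _
        · rw [insert_eq_of_mem hx]
      rw [this]
      exact le_add_of_nonneg_right (by positivity)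
    · rw [mem_insert, not_or] at hx
      rw [erase_insert_of_ne hx.1, card_insert_of_notMem (fun h => hx.2 (mem_of_mem_erase h)),
        zero_add, pow_succ']
  calc _ ≤ ∑ x, ((if x ∈ insert r S then q ^ #(S.erase r) else 0) + q * q ^ #(S.erase r)) :=
        sum_le_sum fun x _ => hterm x
    _ = (#(insert r S) + 1) * q ^ #(S.erase r) := by
        rw [sum_add_distrib, sum_ite_mem, univ_inter, sum_const, sum_const, card_univ,
          nsmul_eq_mul, nsmul_eq_mul, ← mul_assoc, hcard]
        ring
    _ ≤ (#S + 2) * q ^ #(S.erase r) := by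
        have : (#(insert r S) : ℝ) ≤ #S + 1 := by exact_mod_cast card_insert_le r S
        gcongr ?_ * _
        linarith

theorem sum_inv_card_pow_card_erase_image_fin_le {ι : Type*} [Fintype ι] [DecidableEq ι]
    (r : ι) (T : ℕ) :
    ∑ G : Fin T → ι, ((Fintype.card ι : ℝ)⁻¹) ^ #((univ.image G).erase r)
      ≤ ((T : ℝ) + 1) ^ T := by
  set q : ℝ := (Fintype.card ι : ℝ)⁻¹
  induction T with
  | zero => simp
  | succ T ih =>
    have hcons : ∀ x (G : Fin T → ι),
        univ.image (Fin.cons x G : Fin (T + 1) → ι) = insert x (univ.image G) := by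
      intro x G
      ext y
      simp [Fin.exists_fin_succ, eq_comm]
    have hstep : ∀ G : Fin T → ι, ∑ x, q ^ #((insert x (univ.image G)).erase r)
        ≤ ((T : ℝ) + 2) * q ^ #((univ.image G).erase r) := by
      intro G
      have : (#(univ.image G) : ℝ) ≤ T := by
        exact_mod_cast (card_image_le (s := univ) (f := G)).trans_eq (by simp)
      refine (sum_inv_card_pow_card_erase_insert_le r _).trans ?_
      gcongr ?_ * _
      linarith
    calc _ = ∑ G : Fin T → ι, ∑ x, q ^ #((insert x (univ.image G)).erase r) := by
          rw [← (Fin.consEquiv fun _ => ι).sum_comp, Fintype.sum_prod_type, sum_comm]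
          refine sum_congr rfl fun G _ => sum_congr rfl fun x _ => ?_
          rw [← hcons]
          rfl
      _ ≤ ∑ G : Fin T → ι, ((T : ℝ) + 2) * q ^ #((univ.image G).erase r) :=
          sum_le_sum fun G _ => hstep G
      _ ≤ ((T : ℝ) + 2) * ((T : ℝ) + 1) ^ T := by rw [← mul_sum]; gcongr
      _ ≤ ((T : ℝ) + 2) * ((T : ℝ) + 2) ^ T := by gcongr; linarith
      _ = (((T + 1 : ℕ) : ℝ) + 1) ^ (T + 1) := by push_cast; ring

theorem sum_inv_card_pow_card_erase_image_le {P ι : Type*} [Fintype P] [DecidableEq P]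
    [Fintype ι] [DecidableEq ι] (r : ι) :
    ∑ G : P → ι, ((Fintype.card ι : ℝ)⁻¹) ^ #((univ.image G).erase r)
      ≤ ((Fintype.card P : ℝ) + 1) ^ Fintype.card P := by
  set e := Fintype.equivFin P
  rw [← (e.arrowCongr (Equiv.refl ι)).symm.sum_comp]
  convert sum_inv_card_pow_card_erase_image_fin_le r (Fintype.card P) using 3 with G
  simp [Equiv.arrowCongr, ← image_image]

structure IndepCenteredBounded {κ Ω : Type*} [MeasurableSpace Ω] (Y : κ → Ω → ℝ)
    (μ : Measure Ω) (σ : ℝ) : Prop where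
  indep : iIndepFun Y μ
  measurable : ∀ q, Measurable (Y q)
  abs_le_one : ∀ q, ∀ᵐ ω ∂μ, |Y q ω| ≤ 1
  integral_eq_zero : ∀ q, ∫ ω, Y q ω ∂μ = 0
  integral_sq_le : ∀ q, ∫ ω, |Y q ω| ^ 2 ∂μ ≤ σ

theorem Sym2.apply_sortEquiv_mk {α β : Type*} [LinearOrder α] {f : α → α → β}
    (hf : ∀ i j, f i j = f j i) (i j : α) :
    f (Sym2.sortEquiv s(i, j)).1.1 (Sym2.sortEquiv s(i, j)).1.2 = f i j := by
  rcases le_total i j with hij | hij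
  · simp [hij]
  · simp [hij, hf i j]

theorem IndepCenteredBounded.of_upperTriangle {ι Ω : Type*} [LinearOrder ι] [MeasurableSpace Ω]
    {μ : Measure Ω} {σ : ℝ} {h : ι → ι → Ω → ℝ}
    (hmeas : ∀ i j, Measurable (h i j))
    (hindep : iIndepFun (fun q : {q : ι × ι // q.1 ≤ q.2} => h q.1.1 q.1.2) μ)
    (hmean : ∀ i j, ∫ ω, h i j ω ∂μ = 0)
    (hbdd : ∀ i j, ∀ᵐ ω ∂μ, |h i j ω| ≤ 1)
    (hvar : ∀ i j, ∫ ω, |h i j ω| ^ 2 ∂μ ≤ σ) :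
    IndepCenteredBounded (fun e => h (Sym2.sortEquiv e).1.1 (Sym2.sortEquiv e).1.2) μ σ where
  indep := hindep.precomp Sym2.sortEquiv.injective
  measurable _ := hmeas _ _
  abs_le_one _ := hbdd _ _
  integral_eq_zero _ := hmean _ _
  integral_sq_le _ := hvar _ _

section

variable {Ω κ : Type*} [MeasurableSpace Ω] {μ : Measure Ω}

theorem integrable_prod_of_abs_le_one [IsFiniteMeasure μ] (X : κ → Ω → ℝ) (s : Finset κ)
    (hmeas : ∀ i, Measurable (X i)) (hb : ∀ i, ∀ᵐ ω ∂μ, |X i ω| ≤ 1) :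
    Integrable (fun ω => ∏ i ∈ s, X i ω) μ := by
  refine .of_bound (measurable_prod s fun i _ => hmeas i).aestronglyMeasurable 1 ?_
  filter_upwards [(ae_ball_iff s.countable_toSet).2 fun i _ => hb i] with ω h
  rw [Real.norm_eq_abs, abs_prod]
  exact prod_le_one (fun i _ => abs_nonneg _) h

theorem abs_integral_pow_le_integral_sq [IsFiniteMeasure μ] {X : Ω → ℝ} (hX : Measurable X)
    (hb : ∀ᵐ ω ∂μ, |X ω| ≤ 1) {m : ℕ} (hm : 2 ≤ m) :
    |∫ ω, X ω ^ m ∂μ| ≤ ∫ ω, |X ω| ^ 2 ∂μ := by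
  have hb' : ∀ k : ℕ, ∀ᵐ ω ∂μ, ‖|X ω| ^ k‖ ≤ 1 := fun k => by
    filter_upwards [hb] with ω h
    rw [Real.norm_eq_abs, abs_pow, abs_abs]
    exact pow_le_one₀ (abs_nonneg _) h
  calc |∫ ω, X ω ^ m ∂μ| ≤ ∫ ω, |X ω| ^ m ∂μ := by
        simpa only [Real.norm_eq_abs, abs_pow] using
          norm_integral_le_integral_norm (fun ω => X ω ^ m)
    _ ≤ ∫ ω, |X ω| ^ 2 ∂μ := by
        refine integral_mono_ae (.of_bound (by fun_prop) 1 (hb' m))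
          (.of_bound (by fun_prop) 1 (hb' 2)) ?_
        filter_upwards [hb] with ω h
        exact pow_le_pow_of_le_one (abs_nonneg _) h hm

theorem ProbabilityTheory.iIndepFun.integral_finset_prod_comp {Y : κ → Ω → ℝ}
    (hY : iIndepFun Y μ) (hmeas : ∀ q, Measurable (Y q)) {f : κ → ℝ → ℝ}
    (hf : ∀ q, Measurable (f q)) (s : Finset κ) :
    ∫ ω, ∏ q ∈ s, f q (Y q ω) ∂μ = ∏ q ∈ s, ∫ ω, f q (Y q ω) ∂μ := by
  have hs := (hY.precomp Subtype.val_injective (ι' := s)).integral_fun_prod_comp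
    (f := fun q : s => f q) (fun q => (hmeas q).aemeasurable)
    (fun q => (hf q).aestronglyMeasurable)
  have hcoe : ∀ ω, ∏ q : s, f q (Y q ω) = ∏ q ∈ s, f q (Y q ω) := fun ω =>
    prod_coe_sort s (fun q => f q (Y q ω))
  simpa only [hcoe, prod_coe_sort s (fun q => ∫ ω, f q (Y q ω) ∂μ)] using hs

theorem IndepCenteredBounded.abs_integral_prod_le [IsProbabilityMeasure μ] {Y : κ → Ω → ℝ}
    {σ : ℝ} (hY : IndepCenteredBounded Y μ σ) {P : Type*} [Fintype P] [DecidableEq κ]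
    (e : P → κ) : |∫ ω, ∏ p, Y (e p) ω ∂μ| ≤ σ ^ #(univ.image e) := by
  set m : κ → ℕ := fun q => #{p | e p = q}
  -- A factor of multiplicity one vanishes by centering; for higher multiplicities `|Y q| ≤ 1`
  -- reduces it to the second moment.
  have hfactor : ∀ q ∈ univ.image e, |∫ ω, Y q ω ^ m q ∂μ| ≤ σ := by
    intro q hq
    obtain ⟨p, -, rfl⟩ := mem_image.1 hq
    have hm : 1 ≤ m (e p) := card_pos.2 ⟨p, by simp⟩
    rcases hm.eq_or_lt with hm | hm
    · have hσ : 0 ≤ σ :=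
        (integral_nonneg fun ω => by positivity).trans (hY.integral_sq_le (e p))
      simpa [← hm, hY.integral_eq_zero] using hσ
    · exact (abs_integral_pow_le_integral_sq (hY.measurable _) (hY.abs_le_one _) hm).trans
        (hY.integral_sq_le _)
  calc |∫ ω, ∏ p, Y (e p) ω ∂μ|
    _ = |∏ q ∈ univ.image e, ∫ ω, Y q ω ^ m q ∂μ| := by
        simp_rw [fun ω => prod_comp (s := univ) (fun q => Y q ω) e]
        rw [hY.indep.integral_finset_prod_comp (f := fun q x => x ^ m q) hY.measurable
          (fun q => measurable_id.pow_const (m q))]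
    _ ≤ σ ^ #(univ.image e) := by
        rw [abs_prod, ← prod_const]
        exact prod_le_prod (fun _ _ => abs_nonneg _) hfactor

theorem measure_lt_abs_le_of_integral_pow_le [IsFiniteMeasure μ] {X : Ω → ℝ} {K : ℕ}
    (hK : Even K) (hX : Integrable (fun ω => X ω ^ K) μ) {t M : ℝ} (ht : 0 < t)
    (hM : ∫ ω, X ω ^ K ∂μ ≤ M) : μ {ω | t < |X ω|} ≤ ENNReal.ofReal (M / t ^ K) := by
  have hsub : {ω | t < |X ω|} ⊆ {ω | t ^ K ≤ X ω ^ K} := fun ω hω => by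
    rw [Set.mem_ofPred_eq, ← hK.pow_abs (X ω)]
    exact pow_le_pow_left₀ ht.le (le_of_lt hω) K
  have hmarkov := mul_meas_ge_le_integral_of_nonneg
    (ae_of_all μ fun ω => hK.pow_nonneg (X ω)) hX (t ^ K)
  calc μ {ω | t < |X ω|} ≤ μ {ω | t ^ K ≤ X ω ^ K} := measure_mono hsub
    _ = ENNReal.ofReal (μ.real {ω | t ^ K ≤ X ω ^ K}) :=
        (ofReal_measureReal (measure_ne_top μ _)).symm
    _ ≤ ENNReal.ofReal (M / t ^ K) := by
        gcongr
        rw [le_div_iff₀ (by positivity), mul_comm]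
        exact hmarkov.trans hM

theorem ofReal_one_sub_le_measure_forall [IsProbabilityMeasure μ] [Fintype κ]
    {p : κ → Ω → Prop} {δ : ℝ} (hδ : 0 ≤ δ)
    (h : ∀ i, μ {ω | ¬ p i ω} ≤ ENNReal.ofReal δ) :
    ENNReal.ofReal (1 - Fintype.card κ * δ) ≤ μ {ω | ∀ i, p i ω} := by
  have hcompl : μ {ω | ∀ i, p i ω}ᶜ ≤ ENNReal.ofReal (Fintype.card κ * δ) := by
    calc μ {ω | ∀ i, p i ω}ᶜ = μ (⋃ i, {ω | ¬ p i ω}) := by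
          congr 1; ext ω; simp
      _ ≤ ∑ i, μ {ω | ¬ p i ω} := measure_iUnion_fintype_le μ _
      _ ≤ ∑ _i : κ, ENNReal.ofReal δ := sum_le_sum fun i _ => h i
      _ = ENNReal.ofReal (Fintype.card κ * δ) := by
          rw [sum_const, card_univ, nsmul_eq_mul, ENNReal.ofReal_mul (by positivity),
            ENNReal.ofReal_natCast]
  rw [ENNReal.ofReal_sub _ (by positivity), ENNReal.ofReal_one, tsub_le_iff_right]
  calc 1 = μ Set.univ := measure_univ.symm
    _ ≤ μ {ω | ∀ i, p i ω} + μ {ω | ∀ i, p i ω}ᶜ := measure_univ_le_add_compl _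
    _ ≤ _ := by gcongr

end

section

variable {Ω ι : Type*} [MeasurableSpace Ω] {μ : Measure Ω} [Fintype ι] [DecidableEq ι]

theorem integrable_pow_mulVec_apply_pow [IsFiniteMeasure μ] {H : Ω → Matrix ι ι ℝ}
    (hmeas : ∀ i j, Measurable fun ω => H ω i j)
    (hbdd : ∀ i j, ∀ᵐ ω ∂μ, |H ω i j| ≤ 1)
    (u : ι → ℝ) (a K : ℕ) (r : ι) : Integrable (fun ω => (H ω ^ a *ᵥ u) r ^ K) μ := by
  simp_rw [pow_mulVec_apply_pow_eq_sum]
  refine integrable_finsetSum _ fun g _ =>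
    (integrable_prod_of_abs_le_one _ _ (fun p => ?_) (fun p => ?_)).const_mul _
  · exact hmeas _ _
  · exact hbdd _ _

variable [IsProbabilityMeasure μ] {Y : Sym2 ι → Ω → ℝ} {H : Ω → Matrix ι ι ℝ}

theorem IndepCenteredBounded.mul_integral_prod_walk_edges_le
    (hY : IndepCenteredBounded Y μ (Fintype.card ι)⁻¹) {u : ι → ℝ} {S : ℝ}
    (hu : ∀ i, |u i| ≤ S) (r : ι) {K a : ℕ} (g : Fin K → Fin a → ι) :
    (∏ j, u ((Fin.cons r (g j) : Fin (a + 1) → ι) (Fin.last a))) *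
        ∫ ω, ∏ p : Fin K × Fin a,
          Y s((Fin.cons r (g p.1) : Fin (a + 1) → ι) p.2.castSucc, g p.1 p.2) ω ∂μ
      ≤ S ^ K * ((Fintype.card ι : ℝ)⁻¹) ^
          #((univ.image fun p : Fin K × Fin a => g p.1 p.2).erase r) := by
  have hq : (Fintype.card ι : ℝ)⁻¹ ≤ 1 :=
    inv_le_one_of_one_le₀ (by exact_mod_cast Fintype.card_pos_iff.2 ⟨r⟩)
  have hU : |∏ j, u ((Fin.cons r (g j) : Fin (a + 1) → ι) (Fin.last a))| ≤ S ^ K := by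
    rw [abs_prod, ← Fin.prod_const]
    exact prod_le_prod (fun _ _ => abs_nonneg _) fun j _ => hu _
  refine (le_abs_self _).trans ?_
  rw [abs_mul]
  refine mul_le_mul hU ((hY.abs_integral_prod_le _).trans ?_) (abs_nonneg _)
    ((abs_nonneg _).trans hU)
  exact pow_le_pow_of_le_one (by positivity) hq (card_erase_image_le_card_image_walk_edges r g)

theorem IndepCenteredBounded.integral_pow_mulVec_apply_pow_le
    (hY : IndepCenteredBounded Y μ (Fintype.card ι)⁻¹)
    (hHY : ∀ ω i j, H ω i j = Y s(i, j) ω)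
    {u : ι → ℝ} {S : ℝ} (hu : ∀ i, |u i| ≤ S) (a K : ℕ) (r : ι) :
    ∫ ω, (H ω ^ a *ᵥ u) r ^ K ∂μ ≤ S ^ K * (((K * a : ℕ) : ℝ) + 1) ^ (K * a) := by
  have hwalks : ∑ g : Fin K → Fin a → ι, ((Fintype.card ι : ℝ)⁻¹) ^
        #((univ.image fun p : Fin K × Fin a => g p.1 p.2).erase r)
      ≤ (((K * a : ℕ) : ℝ) + 1) ^ (K * a) := by
    rw [← (Equiv.curry (Fin K) (Fin a) ι).sum_comp]
    simpa only [Equiv.curry_apply, Function.curry_apply, Prod.mk.eta, Fintype.card_prod,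
      Fintype.card_fin, Nat.cast_mul] using
      sum_inv_card_pow_card_erase_image_le (P := Fin K × Fin a) r
  simp_rw [pow_mulVec_apply_pow_eq_sum, hHY]
  rw [integral_finsetSum _ fun g _ => (integrable_prod_of_abs_le_one _ _
    (fun p => hY.measurable _) (fun p => hY.abs_le_one _)).const_mul _]
  simp_rw [integral_const_mul]
  refine (sum_le_sum fun g _ => hY.mul_integral_prod_walk_edges_le hu r g).trans ?_
  rw [← mul_sum]
  exact mul_le_mul_of_nonneg_left hwalks (pow_nonneg ((abs_nonneg _).trans (hu r)) K)

theorem IndepCenteredBounded.measure_lt_abs_pow_mulVec_apply_le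
    (hY : IndepCenteredBounded Y μ (Fintype.card ι)⁻¹)
    (hHY : ∀ ω i j, H ω i j = Y s(i, j) ω)
    {u : ι → ℝ} {S : ℝ} (hu : ∀ i, |u i| ≤ S) {K : ℕ} (hK : Even K)
    {x : ℝ} (hx : 0 < x)
    (a : ℕ) (r : ι) :
    μ {ω | x ^ a * S < |(H ω ^ a *ᵥ u) r|}
      ≤ ENNReal.ofReal (((((K * a : ℕ) : ℝ) + 1) / x) ^ (K * a)) := by
  rcases ((abs_nonneg _).trans (hu r)).eq_or_lt with hS | hS
  · have hu0 : u = 0 := funext fun i => abs_nonpos_iff.1 (hS ▸ hu i)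
    simp [hu0, ← hS]
  have hint := integrable_pow_mulVec_apply_pow (μ := μ) (H := H)
    (fun i j => by simp_rw [hHY]; exact hY.measurable _)
    (fun i j => by simp_rw [hHY]; exact hY.abs_le_one _) u a K r
  calc _ ≤ ENNReal.ofReal (S ^ K * (((K * a : ℕ) : ℝ) + 1) ^ (K * a) / (x ^ a * S) ^ K) :=
        measure_lt_abs_le_of_integral_pow_le hK hint (by positivity)
          (hY.integral_pow_mulVec_apply_pow_le hHY hu a K r)
    _ = _ := by
        rw [mul_pow, ← pow_mul, div_pow, mul_comm a K]
        field_simp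

end

theorem add_one_div_mul_rpow_le {c L T : ℝ} (hL : 1 ≤ L) (hc : 25 ≤ 4 * c) (hT : 2 * L ≤ T)
    (hT' : T ≤ 4 * L) : ((T + 1) / (c * L)) ^ T ≤ (4 / c) ^ (2 * L) := by
  have hc0 : 0 < c := by linarith
  set t := T / (2 * L) - 1 with ht
  have hTt : T = (1 + t) * (2 * L) := by rw [ht]; field_simp; ring
  have ht0 : 0 ≤ t := by rw [ht, sub_nonneg, le_div_iff₀ (by linarith)]; linarith
  have ht1 : t ≤ 1 := by rw [ht, sub_le_iff_le_add, div_le_iff₀ (by linarith)]; linarith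
  have hbase : (T + 1) / (c * L) ≤ (3 + 2 * t) / c := by
    rw [div_le_div_iff₀ (by positivity) hc0, hTt]
    nlinarith
  -- Bernoulli's inequality for the exponent `t ∈ [0, 1]`, then `(3 + 2t)(1 - t/5) ≤ 4`.
  have hkey : ((3 + 2 * t) / c) ^ (1 + t) ≤ 4 / c := by
    have hsmall : ((3 + 2 * t) / c) ^ t ≤ 1 + t * (-1 / 5) := by
      calc ((3 + 2 * t) / c) ^ t ≤ (1 + -1 / 5 : ℝ) ^ t := by
            gcongr
            rw [div_le_iff₀ hc0]
            nlinarith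
        _ ≤ 1 + t * (-1 / 5) := rpow_one_add_le_one_add_mul_self (by norm_num) ht0 ht1
    rw [Real.rpow_add' (by positivity) (by linarith), Real.rpow_one, div_mul_eq_mul_div,
      div_le_div_iff_of_pos_right hc0]
    calc (3 + 2 * t) * ((3 + 2 * t) / c) ^ t ≤ (3 + 2 * t) * (1 + t * (-1 / 5)) := by gcongr
      _ ≤ 4 := by nlinarith
  have hL0 : 0 < L := by linarith
  have hT0 : 0 < T := by linarith
  calc ((T + 1) / (c * L)) ^ T ≤ ((3 + 2 * t) / c) ^ T := by gcongr
    _ = (((3 + 2 * t) / c) ^ (1 + t)) ^ (2 * L) := by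
        rw [← Real.rpow_mul (by positivity), ← hTt]
    _ ≤ (4 / c) ^ (2 * L) := by gcongr

theorem rpow_one_sub_two_mul_log_div_four {x c : ℝ} (hx : 0 < x) (hc : 0 < c) :
    x ^ (1 - 2 * Real.log (c / 4)) = x * (4 / c) ^ (2 * Real.log x) := by
  have hlog : Real.log (4 / c) = -Real.log (c / 4) := by rw [← Real.log_inv, inv_div]
  calc x ^ (1 - 2 * Real.log (c / 4))
      = Real.exp (Real.log x + Real.log (4 / c) * (2 * Real.log x)) := by
        rw [Real.rpow_def_of_pos hx, hlog]
        ring_nf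
    _ = x * (4 / c) ^ (2 * Real.log x) := by
        rw [Real.exp_add, Real.exp_log hx, ← Real.rpow_def_of_pos (by positivity)]

theorem exists_even_mul_mem_Icc {a : ℕ} {L : ℝ} (ha : 0 < a) (haL : (a : ℝ) ≤ L) :
    ∃ K : ℕ, Even K ∧ 2 * L ≤ (K * a : ℕ) ∧ ((K * a : ℕ) : ℝ) ≤ 4 * L := by
  have ha' : (0 : ℝ) < a := by exact_mod_cast ha
  refine ⟨2 * ⌈L / a⌉₊, even_two_mul _, ?_, ?_⟩
  · have := Nat.le_ceil (L / a)
    rw [div_le_iff₀ ha'] at this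
    push_cast
    nlinarith
  · have := Nat.ceil_lt_add_one (div_nonneg (ha'.le.trans haL) ha'.le)
    rw [← sub_lt_iff_lt_add, lt_div_iff₀ ha'] at this
    push_cast
    nlinarith

/-- Entries of powers of a random symmetric matrix with independent centered
entries (all moments up to order `2 log n` bounded by `1/n`) applied to a fixed
vector `u` are bounded: with probability at least `1 − n^{1 − 2 log(c/4)}`,
`|⟨e_r, Ĥᵃ u⟩| ≤ (c log n)ᵃ ‖u‖_∞` for all `r`. -/
theorem stmt9 (n a : ℕ) (ha1 : 1 ≤ a) (ha2 : (a : ℝ) ≤ Real.log n)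
    (u : Fin n → ℝ) (c : ℝ) (hc : 4 < c)
    (Ω : Type*) [MeasurableSpace Ω] (μ : Measure Ω) [IsProbabilityMeasure μ]
    (h : Fin n → Fin n → Ω → ℝ)
    (hmeas : ∀ i j, Measurable (h i j))
    (hsymm : ∀ i j ω, h i j ω = h j i ω)
    (hindep : iIndepFun
      (fun q : {q : Fin n × Fin n // q.1 ≤ q.2} => h q.1.1 q.1.2) μ)
    (hmean : ∀ i j, (∫ ω, h i j ω ∂μ) = 0)
    (hbdd : ∀ i j, ∀ᵐ ω ∂μ, |h i j ω| < 1)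
    (hmom : ∀ i j, ∀ k : ℕ, 2 ≤ k → (k : ℝ) ≤ 2 * Real.log n →
      (∫ ω, |h i j ω| ^ k ∂μ) ≤ 1 / n) :
    μ {ω | ∀ r : Fin n,
        |((Matrix.of fun i j => h i j ω) ^ a).mulVec u r|
          ≤ (c * Real.log n) ^ a * ⨆ i, |u i|}
      ≥ ENNReal.ofReal (1 - (n : ℝ) ^ ((1 : ℝ) - 2 * Real.log (c / 4))) := by
  set L := Real.log n
  have hL : 1 ≤ L := le_trans (by exact_mod_cast ha1) ha2
  have hn : (1 : ℝ) < n := by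
    by_contra! hn
    linarith [Real.log_nonpos (Nat.cast_nonneg n) hn]
  rcases le_or_gt (Real.log (c / 4)) (1 / 2) with hc' | hc'
  · have := Real.one_le_rpow hn.le (by linarith : 0 ≤ 1 - 2 * Real.log (c / 4))
    rw [ENNReal.ofReal_of_nonpos (by linarith)]
    exact zero_le
  have hc25 : 25 ≤ 4 * c := by
    have := (Real.lt_log_iff_exp_lt (by linarith)).1 hc'
    linarith [Real.quadratic_le_exp_of_nonneg (by norm_num : (0 : ℝ) ≤ 1 / 2)]
  obtain ⟨K, hK, hT, hT'⟩ := exists_even_mul_mem_Icc ha1 ha2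
  have hY : IndepCenteredBounded _ μ (Fintype.card (Fin n) : ℝ)⁻¹ :=
    .of_upperTriangle hmeas hindep hmean (fun i j => (hbdd i j).mono fun _ h => h.le)
      fun i j => by simpa using hmom i j 2 le_rfl (by push_cast; linarith)
  have hHY (ω) (i j : Fin n) :
      h i j ω = h (Sym2.sortEquiv s(i, j)).1.1 (Sym2.sortEquiv s(i, j)).1.2 ω :=
    (congrFun (Sym2.apply_sortEquiv_mk (fun i j => funext (hsymm i j)) i j) ω).symm
  have hrow := fun r => hY.measure_lt_abs_pow_mulVec_apply_le
    (H := fun ω => Matrix.of fun i j => h i j ω) hHY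
    (fun i => le_ciSup (Finite.bddAbove_range fun i => |u i|) i) hK (x := c * L)
    (by positivity) a r
  refine le_trans ?_ (ofReal_one_sub_le_measure_forall
    (δ := ((((K * a : ℕ) : ℝ) + 1) / (c * L)) ^ (K * a)) (by positivity) fun r => by
    simpa only [not_le] using hrow r)
  gcongr
  rw [Fintype.card_fin, rpow_one_sub_two_mul_log_div_four (by linarith) (by linarith),
    ← Real.rpow_natCast]
  gcongr
  exact add_one_div_mul_rpow_le hL hc25 hT hT'
end

section
/- Let X ∈ ℝ^{n×n} be symmetric of rank at most k, let P_k(M) = U*Σ(U*)ᵀ be a rank-k symmetric matrix with σ_k := σ_k(P_k(M)) > 0, and suppose ‖X − P_k(M)‖_F < σ_k/n². Decompose X = U*Λ₀(U*)ᵀ + U*Λ₁(U*_⊥)ᵀ + U*_⊥Λ₁ᵀ(U*)ᵀ + U*_⊥Λ₃(U*_⊥)ᵀ along the tangent space of P_k(M). Then ‖Σ − Λ₀‖_F ≤ ‖X − P_k(M)‖_F, ‖Λ₁‖_F ≤ ‖X − P_k(M)‖_F, and ‖Λ₃‖_F ≤ ‖X − P_k(M)‖_F/n² (the last via ‖Λ₃‖_F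 ≤ ‖X − P_k(M)‖_F²/σ_k(X)). -/
open Matrix

/-!
Write `e = ‖X - P‖` for `P = Us diag(d) Usᵀ`. The Frobenius norm splits along the orthogonal
decomposition `1 = Us Usᵀ + Uperp Uperpᵀ`, and `P` lives in the `Us`-block, so
`e² = ‖diag d - Λ₀‖² + 2‖Λ₁‖² + ‖Λ₃‖²`; this gives the first two bounds.

For `Λ₃`, note that `Λ₀` is within `e` of `diag d`, whose entries are at least `σ` in absolute
value, so `‖Λ₀ W‖ ≥ (σ - e)‖W‖` for every `W`. In particular `Λ₀` is invertible, so `X Us`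
already has rank `k ≥ rank X` and `X Uperp = X Us W` for some `W`. Then `Λ₁ = Λ₀ W` and
`Λ₃ = Λ₁ᵀ W` (the Schur complement of `Λ₀` in `X` vanishes), hence
`(σ - e)‖Λ₃‖ ≤ ‖Λ₁‖‖Λ₀ W‖ = ‖Λ₁‖² ≤ e²/2`, which is at most `(σ - e) e / n²` since `e n² < σ`
and `n ≥ 2`.
-/

attribute [local instance] Matrix.frobeniusNormedAddCommGroup

namespace Matrix

theorem exists_mul_eq_mul_mul_of_rank_le {m n a b K : Type*} [Fintype n] [Fintype a] [Field K]
    {X : Matrix m n K} {U : Matrix n a K} (h : X.rank ≤ (X * U).rank) (V : Matrix n b K) :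
    ∃ W : Matrix a b K, X * V = X * U * W := by
  have hrange : LinearMap.range (X * U).mulVecLin = LinearMap.range X.mulVecLin := by
    refine Submodule.eq_of_le_of_finrank_le ?_ h
    rw [mulVecLin_mul]
    exact LinearMap.range_comp_le_range _ _
  have hcol : ∀ j, ∃ w : a → K, (X * U) *ᵥ w = X *ᵥ (fun i => V i j) := fun j =>
    hrange.ge ⟨fun i => V i j, rfl⟩
  choose w hw using hcol
  refine ⟨of fun l j => w j l, ?_⟩
  ext i j
  exact (congrFun (hw j) i).symm

variable {m n a b : Type*} [Fintype m] [Fintype n] [Fintype a] [Fintype b]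

theorem frobenius_norm_sq_eq_sum (A : Matrix m n ℝ) : ‖A‖ ^ 2 = ∑ i, ∑ j, A i j ^ 2 := by
  rw [frobenius_norm_def, ← Real.sqrt_eq_rpow, Real.sq_sqrt (by positivity)]
  simp only [Real.rpow_two, Real.norm_eq_abs, sq_abs]

theorem frobenius_norm_sq_eq_trace (A : Matrix m n ℝ) : ‖A‖ ^ 2 = trace (Aᵀ * A) := by
  rw [frobenius_norm_sq_eq_sum, Finset.sum_comm]
  simp only [trace, diag, mul_apply, transpose_apply, sq]

theorem frobenius_norm_sq_transpose_mul_mul (P : Matrix m a ℝ) (E : Matrix m m ℝ)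
    (Q : Matrix m b ℝ) : ‖Pᵀ * E * Q‖ ^ 2 = trace (Eᵀ * (P * Pᵀ) * E * (Q * Qᵀ)) := by
  rw [frobenius_norm_sq_eq_trace, ← Matrix.mul_assoc (Eᵀ * (P * Pᵀ) * E), trace_mul_comm _ Qᵀ]
  simp only [transpose_mul, transpose_transpose, Matrix.mul_assoc]

theorem frobenius_norm_sq_eq_sum_blocks [DecidableEq m] {U : Matrix m a ℝ} {V : Matrix m b ℝ}
    (hUV : U * Uᵀ + V * Vᵀ = 1) (E : Matrix m m ℝ) :
    ‖E‖ ^ 2 = ‖Uᵀ * E * U‖ ^ 2 + ‖Uᵀ * E * V‖ ^ 2 + ‖Vᵀ * E * U‖ ^ 2 + ‖Vᵀ * E * V‖ ^ 2 := by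
  have h1 : ‖E‖ ^ 2 = trace (Eᵀ * 1 * E * 1) := by
    rw [frobenius_norm_sq_eq_trace, Matrix.mul_one, Matrix.mul_one]
  rw [h1, ← hUV]
  simp only [Matrix.mul_add, Matrix.add_mul, trace_add, frobenius_norm_sq_transpose_mul_mul]
  ring

theorem transpose_mul_eq_zero_of_mul_transpose_add [DecidableEq m] [DecidableEq a]
    [DecidableEq b] {U : Matrix m a ℝ} {V : Matrix m b ℝ} (hU : Uᵀ * U = 1) (hV : Vᵀ * V = 1)
    (hUV : U * Uᵀ + V * Vᵀ = 1) : Vᵀ * U = 0 := by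
  have h : Vᵀ * U * (Uᵀ * U) + Vᵀ * V * (Vᵀ * U) = Vᵀ * (U * Uᵀ + V * Vᵀ) * U := by
    simp only [Matrix.mul_add, Matrix.add_mul, Matrix.mul_assoc]
  rw [hU, hV, hUV, Matrix.mul_one, Matrix.one_mul, Matrix.mul_one] at h
  simpa using h

theorem frobenius_norm_sq_sub_eq_blocks [DecidableEq m] [DecidableEq a] [DecidableEq b]
    {X : Matrix m m ℝ} (hX : X.IsSymm) {U : Matrix m a ℝ} {V : Matrix m b ℝ}
    (hU : Uᵀ * U = 1) (hV : Vᵀ * V = 1) (hUV : U * Uᵀ + V * Vᵀ = 1) (d : a → ℝ) :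
    ‖X - U * diagonal d * Uᵀ‖ ^ 2
      = ‖diagonal d - Uᵀ * X * U‖ ^ 2 + 2 * ‖Uᵀ * X * V‖ ^ 2 + ‖Vᵀ * X * V‖ ^ 2 := by
  have hVU := transpose_mul_eq_zero_of_mul_transpose_add hU hV hUV
  have hUV' : Uᵀ * V = 0 := by simpa using congrArg transpose hVU
  have hXVU : Vᵀ * X * U = (Uᵀ * X * V)ᵀ := by
    rw [transpose_mul, transpose_mul, hX.eq, transpose_transpose, Matrix.mul_assoc]
  have hPUU : Uᵀ * (U * diagonal d * Uᵀ) * U = diagonal d := by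
    rw [← Matrix.mul_assoc, ← Matrix.mul_assoc, hU, Matrix.one_mul, Matrix.mul_assoc, hU,
      Matrix.mul_one]
  have hPUV : Uᵀ * (U * diagonal d * Uᵀ) * V = 0 := by
    rw [Matrix.mul_assoc, Matrix.mul_assoc, hUV', Matrix.mul_zero, Matrix.mul_zero]
  have hPVU : Vᵀ * (U * diagonal d * Uᵀ) * U = 0 := by
    rw [← Matrix.mul_assoc, ← Matrix.mul_assoc, hVU, Matrix.zero_mul, Matrix.zero_mul,
      Matrix.zero_mul]
  have hPVV : Vᵀ * (U * diagonal d * Uᵀ) * V = 0 := by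
    rw [Matrix.mul_assoc, Matrix.mul_assoc, hUV', Matrix.mul_zero, Matrix.mul_zero]
  rw [frobenius_norm_sq_eq_sum_blocks hUV]
  simp only [Matrix.mul_sub, Matrix.sub_mul, hPUU, hPUV, hPVU, hPVV, sub_zero, hXVU,
    frobenius_norm_transpose, norm_sub_rev (Uᵀ * X * U)]
  ring

theorem mul_norm_le_norm_diagonal_mul [DecidableEq a] {d : a → ℝ} {σ : ℝ} (hσ : 0 ≤ σ)
    (hd : ∀ i, σ ≤ |d i|) (W : Matrix a n ℝ) : σ * ‖W‖ ≤ ‖diagonal d * W‖ := by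
  rw [← pow_le_pow_iff_left₀ (by positivity) (norm_nonneg _) two_ne_zero, mul_pow,
    frobenius_norm_sq_eq_sum, frobenius_norm_sq_eq_sum, Finset.mul_sum]
  refine Finset.sum_le_sum fun i _ => ?_
  rw [Finset.mul_sum]
  refine Finset.sum_le_sum fun j _ => ?_
  rw [diagonal_mul, mul_pow, ← sq_abs (d i)]
  gcongr
  exact hd i

theorem sub_mul_norm_le_norm_mul_of_norm_sub_diagonal_le [DecidableEq a] {A : Matrix a a ℝ}
    {d : a → ℝ} {σ e : ℝ} (hσ : 0 ≤ σ) (hd : ∀ i, σ ≤ |d i|) (hA : ‖A - diagonal d‖ ≤ e)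
    (W : Matrix a n ℝ) : (σ - e) * ‖W‖ ≤ ‖A * W‖ := by
  have hsub : ‖(A - diagonal d) * W‖ ≤ e * ‖W‖ :=
    (frobenius_norm_mul _ _).trans (by gcongr)
  have htri : ‖diagonal d * W‖ ≤ ‖A * W‖ + ‖(A - diagonal d) * W‖ := by
    rw [Matrix.sub_mul]
    simpa only [sub_sub_cancel] using norm_sub_le (A * W) (A * W - diagonal d * W)
  nlinarith [mul_norm_le_norm_diagonal_mul hσ hd W]

theorem det_ne_zero_of_mul_norm_le_norm_mul [DecidableEq a] {A : Matrix a a ℝ} {c : ℝ}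
    (hc : 0 < c) (hA : ∀ W : Matrix a Unit ℝ, c * ‖W‖ ≤ ‖A * W‖) : A.det ≠ 0 := by
  intro hdet
  obtain ⟨v, hv, hAv⟩ := exists_mulVec_eq_zero_iff.mpr hdet
  have h := hA (replicateCol Unit v)
  rw [← replicateCol_mulVec, hAv, replicateCol_zero, norm_zero] at h
  have hv' : replicateCol Unit v ≠ 0 := by simpa using hv
  exact absurd h (not_le.mpr (mul_pos hc (norm_pos_iff.mpr hv')))

theorem mul_norm_transpose_mul_mul_le_sq {X : Matrix m m ℝ} (hX : X.IsSymm) {U : Matrix m a ℝ}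
    {V : Matrix m b ℝ} {W : Matrix a b ℝ} (hW : X * V = X * U * W) {c : ℝ} (hc : 0 ≤ c)
    (hA : c * ‖W‖ ≤ ‖Uᵀ * X * U * W‖) : c * ‖Vᵀ * X * V‖ ≤ ‖Uᵀ * X * V‖ ^ 2 := by
  have hB : Uᵀ * X * V = Uᵀ * X * U * W := by
    rw [Matrix.mul_assoc, hW, Matrix.mul_assoc, Matrix.mul_assoc, Matrix.mul_assoc]
  have hC : Vᵀ * X * V = (Uᵀ * X * V)ᵀ * W := by
    rw [Matrix.mul_assoc, hW, transpose_mul, transpose_mul, hX.eq, transpose_transpose]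
    simp only [Matrix.mul_assoc]
  rw [← hB] at hA
  calc c * ‖Vᵀ * X * V‖ ≤ c * (‖Uᵀ * X * V‖ * ‖W‖) := by
        rw [hC]
        gcongr
        exact (frobenius_norm_mul _ _).trans_eq (by rw [frobenius_norm_transpose])
    _ = ‖Uᵀ * X * V‖ * (c * ‖W‖) := by ring
    _ ≤ ‖Uᵀ * X * V‖ ^ 2 := by rw [sq]; gcongr

theorem sub_mul_norm_transpose_mul_mul_le_sq [DecidableEq a] {X : Matrix m m ℝ} (hX : X.IsSymm)
    (hrank : X.rank ≤ Fintype.card a) {U : Matrix m a ℝ} (V : Matrix m b ℝ) {d : a → ℝ}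
    {σ e : ℝ} (hσ : 0 ≤ σ) (hd : ∀ i, σ ≤ |d i|) (hA : ‖diagonal d - Uᵀ * X * U‖ ≤ e)
    (he : e < σ) : (σ - e) * ‖Vᵀ * X * V‖ ≤ ‖Uᵀ * X * V‖ ^ 2 := by
  have hA' : ‖Uᵀ * X * U - diagonal d‖ ≤ e := (norm_sub_rev _ _).trans_le hA
  have hdet := det_ne_zero_of_mul_norm_le_norm_mul (sub_pos.2 he)
    (sub_mul_norm_le_norm_mul_of_norm_sub_diagonal_le hσ hd hA')
  have hrankXU : Fintype.card a ≤ (X * U).rank :=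
    calc Fintype.card a = (Uᵀ * (X * U)).rank := by
          rw [← Matrix.mul_assoc, rank_of_det_ne_zero hdet]
      _ ≤ (X * U).rank := rank_mul_le_right _ _
  obtain ⟨W, hW⟩ := exists_mul_eq_mul_mul_of_rank_le (hrank.trans hrankXU) V
  exact mul_norm_transpose_mul_mul_le_sq hX hW (sub_pos.2 he).le
    (sub_mul_norm_le_norm_mul_of_norm_sub_diagonal_le hσ hd hA' W)

end Matrix

theorem frobNorm_eq_norm {m n : ℕ} (A : Matrix (Fin m) (Fin n) ℝ) : frobNorm A = ‖A‖ := by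
  rw [frobNorm, ← frobenius_norm_sq_eq_sum, Real.sqrt_sq (norm_nonneg _)]

theorem le_div_of_two_mul_sub_mul_le_sq {c e σ N : ℝ} (hN : 2 ≤ N) (he : 0 ≤ e) (hc : 0 ≤ c)
    (hclose : e < σ / N) (h : 2 * ((σ - e) * c) ≤ e ^ 2) : c ≤ e / N := by
  rw [lt_div_iff₀ (by linarith)] at hclose
  rw [le_div_iff₀ (by linarith)]
  have hec : e * (2 * (N - 1) * c) ≤ e * e := by
    nlinarith [mul_nonneg (sub_nonneg.2 hclose.le) hc]
  rcases he.eq_or_lt with rfl | hepos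
  · nlinarith
  · nlinarith [le_of_mul_le_mul_left hec hepos]

theorem stmt15_general (n k : ℕ)
    (X : Matrix (Fin n) (Fin n) ℝ) (hXsymm : X.IsSymm) (hXrank : X.rank ≤ k)
    (Us : Matrix (Fin n) (Fin k) ℝ) (Uperp : Matrix (Fin n) (Fin (n - k)) ℝ)
    (d : Fin k → ℝ)
    (hUs : Usᵀ * Us = 1) (hUperp : Uperpᵀ * Uperp = 1)
    (hcompl : Us * Usᵀ + Uperp * Uperpᵀ = 1)
    (PkM : Matrix (Fin n) (Fin n) ℝ) (hPkM : PkM = Us * Matrix.diagonal d * Usᵀ)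
    (σk : ℝ) (hσk : σk = ⨅ i, |d i|) (hσpos : 0 < σk)
    (hclose : frobNorm (X - PkM) < σk / (n : ℝ) ^ 2) :
    frobNorm (Matrix.diagonal d - Usᵀ * X * Us) ≤ frobNorm (X - PkM) ∧
    frobNorm (Usᵀ * X * Uperp) ≤ frobNorm (X - PkM) ∧
    frobNorm (Uperpᵀ * X * Uperp) ≤ frobNorm (X - PkM) / (n : ℝ) ^ 2 := by
  subst hPkM
  simp only [frobNorm_eq_norm] at hclose ⊢
  have hpyth := frobenius_norm_sq_sub_eq_blocks hXsymm hUs hUperp hcompl d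
  set e := ‖X - Us * diagonal d * Usᵀ‖
  have he : 0 ≤ e := norm_nonneg _
  have hΛ₀ : ‖diagonal d - Usᵀ * X * Us‖ ≤ e :=
    (sq_le_sq₀ (norm_nonneg _) he).1 (by nlinarith [norm_nonneg (Usᵀ * X * Uperp)])
  have hΛ₁ : ‖Usᵀ * X * Uperp‖ ≤ e :=
    (sq_le_sq₀ (norm_nonneg _) he).1 (by nlinarith [norm_nonneg (Uperpᵀ * X * Uperp)])
  refine ⟨hΛ₀, hΛ₁, ?_⟩
  rcases Nat.eq_zero_or_pos (n - k) with hr | hr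
  · have : IsEmpty (Fin (n - k)) := by rw [hr]; infer_instance
    rw [Subsingleton.elim (Uperpᵀ * X * Uperp) 0, norm_zero]
    positivity
  have hk : 0 < k := Nat.pos_of_ne_zero fun hk => by
    subst hk
    rw [Real.iInf_of_isEmpty] at hσk
    linarith
  have hn : (2 : ℝ) ≤ (n : ℝ) ^ 2 := by
    have : (2 : ℝ) ≤ n := by exact_mod_cast (by omega : 2 ≤ n)
    nlinarith
  have heσ : e < σk := by
    rw [lt_div_iff₀ (by linarith)] at hclose
    nlinarith
  have hd : ∀ i, σk ≤ |d i| := fun i => hσk ▸ ciInf_le ⟨0, by rintro _ ⟨j, rfl⟩; positivity⟩ i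
  have hschur := sub_mul_norm_transpose_mul_mul_le_sq hXsymm (by simpa using hXrank) Uperp
    hσpos.le hd hΛ₀ heσ
  exact le_div_of_two_mul_sub_mul_le_sq hn he (norm_nonneg _) hclose (by nlinarith)

/-- Tangent-space decomposition bounds: if `X` is symmetric of rank at most `k`,
`P_k(M) = U* diag(d) (U*)ᵀ` with `σ_k = min |dᵢ| > 0` and
`‖X − P_k(M)‖_F < σ_k/n²`, then the components `Λ₀ = (U*)ᵀXU*`,
`Λ₁ = (U*)ᵀXU*_⊥`, `Λ₃ = (U*_⊥)ᵀXU*_⊥` of `X` along the tangent space satisfy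
`‖Σ−Λ₀‖_F ≤ ‖X−P_k(M)‖_F`, `‖Λ₁‖_F ≤ ‖X−P_k(M)‖_F`, `‖Λ₃‖_F ≤ ‖X−P_k(M)‖_F/n²`. -/
theorem stmt15 (n k : ℕ) (hn : 0 < n)
    (X : Matrix (Fin n) (Fin n) ℝ) (hXsymm : X.IsSymm) (hXrank : X.rank ≤ k)
    (Us : Matrix (Fin n) (Fin k) ℝ) (Uperp : Matrix (Fin n) (Fin (n - k)) ℝ)
    (d : Fin k → ℝ)
    (hUs : Usᵀ * Us = 1) (hUperp : Uperpᵀ * Uperp = 1)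
    (hcompl : Us * Usᵀ + Uperp * Uperpᵀ = 1)
    (PkM : Matrix (Fin n) (Fin n) ℝ) (hPkM : PkM = Us * Matrix.diagonal d * Usᵀ)
    (σk : ℝ) (hσk : σk = ⨅ i, |d i|) (hσpos : 0 < σk)
    (hclose : frobNorm (X - PkM) < σk / (n : ℝ) ^ 2) :
    frobNorm (Matrix.diagonal d - Usᵀ * X * Us) ≤ frobNorm (X - PkM) ∧
    frobNorm (Usᵀ * X * Uperp) ≤ frobNorm (X - PkM) ∧
    frobNorm (Uperpᵀ * X * Uperp) ≤ frobNorm (X - PkM) / (n : ℝ) ^ 2 :=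
  stmt15_general n k X hXsymm hXrank Us Uperp d hUs hUperp hcompl PkM hPkM σk hσk hσpos hclose
end
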